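/- arXiv:1810.08256 — 6 statements merged into one kernel-verified Lean document; each statement's English description precedes it below -/
import Mathlib

section
/- The global defensive alliance number of the lexicographic product C₃ ∘ C₃ equals 5. -/
/-- Lexicographic product of simple graphs. -/
def lexProd {α β : Type*} (G : SimpleGraph α) (H : SimpleGraph β) :
    SimpleGraph (α × β) where
  Adj x y := G.Adj x.1 y.1 ∨ (x.1 = y.1 ∧ H.Adj x.2 y.2)
  symm := by
    constructor
    rintro x y (h | ⟨h1, h2⟩)
    · exact Or.inl h.symm
    · exact Or.inr ⟨h1.symm, h2.symm⟩
  loopless := by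
    constructor
    rintro x (h | ⟨_, h2⟩)
    · exact G.irrefl h
    · exact H.irrefl h2

/-- Closed neighborhood N[v]. -/
def closedNbhd {α : Type*} (G : SimpleGraph α) (v : α) : Set α :=
  insert v (G.neighborSet v)

/-- A defensive alliance: every vertex of S is defended. -/
def IsDefensiveAlliance {α : Type*} (G : SimpleGraph α) (S : Set α) : Prop :=
  ∀ v ∈ S, ((closedNbhd G v) \ S).ncard ≤ ((closedNbhd G v) ∩ S).ncard

/-- A global defensive alliance: a defensive alliance which is also dominating. -/
def IsGDA {α : Type*} (G : SimpleGraph α) (S : Set α) : Prop :=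
  IsDefensiveAlliance G S ∧ ∀ v, v ∈ S ∨ ∃ u ∈ S, G.Adj v u

/-- The global defensive alliance number. -/
noncomputable def gdaNumber {α : Type*} (G : SimpleGraph α) : ℕ :=
  sInf {k | ∃ S : Set α, IsGDA G S ∧ S.ncard = k}

/-- Number of vertices of S in the j-th copy of G² (copies indexed 1,…,n). -/
noncomputable def copyCount {n m : ℕ} (S : Set (Fin n × Fin m)) (j : ℕ) : ℕ :=
  (S ∩ {p | (p.1 : ℕ) + 1 = j}).ncard

/-! C₃ ∘ C₃ is the complete graph K₉. In a complete graph every closed neighbourhood is the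
whole vertex set, so a set `S` is a global defensive alliance exactly when it is nonempty and
`n - |S| ≤ |S|`; the least such size is `⌈n / 2⌉`, which is `5` for `n = 9`. -/

open Set

theorem cycleGraph_three_eq_top : SimpleGraph.cycleGraph 3 = ⊤ := by
  ext u v
  revert u v
  decide

theorem lexProd_top_top {α β : Type*} :
    lexProd (⊤ : SimpleGraph α) (⊤ : SimpleGraph β) = ⊤ := by
  ext x y
  simp only [lexProd, SimpleGraph.top_adj, ne_eq, Prod.ext_iff, not_and_or]
  tauto

theorem closedNbhd_top {α : Type*} (v : α) : closedNbhd ⊤ v = univ := by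
  ext w
  simp only [closedNbhd, mem_insert_iff, SimpleGraph.mem_neighborSet, SimpleGraph.top_adj,
    mem_univ, iff_true]
  exact (eq_or_ne w v).imp_right Ne.symm

theorem isGDA_top_iff {α : Type*} [Finite α] [Nonempty α] {S : Set α} :
    IsGDA ⊤ S ↔ S.Nonempty ∧ Nat.card α ≤ 2 * S.ncard := by
  have hcompl : S.ncard + Sᶜ.ncard = Nat.card α := ncard_add_ncard_compl S
  simp only [IsGDA, IsDefensiveAlliance, closedNbhd_top, ← compl_eq_univ_sdiff, univ_inter,
    SimpleGraph.top_adj]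
  constructor
  · rintro ⟨hdef, hdom⟩
    obtain ⟨v, hv⟩ : S.Nonempty := by
      obtain ⟨w⟩ := ‹Nonempty α›
      rcases hdom w with hw | ⟨u, hu, -⟩
      exacts [⟨w, hw⟩, ⟨u, hu⟩]
    exact ⟨⟨v, hv⟩, by have := hdef v hv; omega⟩
  · rintro ⟨⟨u, hu⟩, hcard⟩
    refine ⟨fun _ _ => by omega, fun v => ?_⟩
    by_cases hv : v ∈ S
    · exact Or.inl hv
    · exact Or.inr ⟨u, hu, fun h => hv (h ▸ hu)⟩

theorem gdaNumber_top {α : Type*} [Finite α] [Nonempty α] :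
    gdaNumber (⊤ : SimpleGraph α) = (Nat.card α + 1) / 2 := by
  have hpos : 0 < Nat.card α := Nat.card_pos
  obtain ⟨S, -, hS⟩ : ∃ S ⊆ (univ : Set α), S.ncard = (Nat.card α + 1) / 2 :=
    exists_subset_card_eq (by rw [ncard_univ]; omega)
  have hmem : (Nat.card α + 1) / 2 ∈ {k | ∃ S : Set α, IsGDA ⊤ S ∧ S.ncard = k} :=
    ⟨S, isGDA_top_iff.2 ⟨nonempty_of_ncard_ne_zero (by omega), by omega⟩, hS⟩
  refine le_antisymm (Nat.sInf_le hmem) (le_csInf ⟨_, hmem⟩ ?_)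
  rintro k ⟨T, hT, rfl⟩
  have := (isGDA_top_iff.1 hT).2
  omega

theorem stmt_2 :
    gdaNumber (lexProd (SimpleGraph.cycleGraph 3) (SimpleGraph.cycleGraph 3)) = 5 := by
  rw [cycleGraph_three_eq_top, lexProd_top_top, gdaNumber_top]
  simp
end

section
/- For every m ≥ 4, the global defensive alliance number of P₂ ∘ Cₘ equals 2⌊m/2⌋. -/
/-!
A vertex `(a, b)` of `P₂ ∘ H` sees the whole other copy of `H` and its closed neighbourhood
`N_H[b]` in its own copy. Writing `S_a ⊆ H` for the trace of `S` on copy `a`, the vertex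
`(a, b) ∈ S` is therefore defended iff `|H| + |N_H[b]| ≤ 2 |S_a'| + 2 |N_H[b] ∩ S_a|`, where
`a'` is the other copy. When `H` has maximum degree at most `2` and `2 |S_a'| + 2 ≤ |H|`, this
forces `N_H[b] ⊆ S_a` for every `b ∈ S_a`; in a connected `H` a nonempty such `S_a` is all of
`H`. So a global defensive alliance either meets both copies in at least `⌊|H|/2⌋` vertices or
contains a whole copy. Conversely, for `H = Cₘ` the product of `P₂` with an arc of
`⌊m/2⌋ ≥ 2` vertices is a global defensive alliance.
-/

open SimpleGraph Set

theorem SimpleGraph.Preconnected.eq_univ_of_forall_adj_mem {α : Type*} {G : SimpleGraph α}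
    (hG : G.Preconnected) {S : Set α} (hS : S.Nonempty)
    (h : ∀ u ∈ S, ∀ v, G.Adj u v → v ∈ S) :
    S = univ := by
  obtain ⟨u, hu⟩ := hS
  refine eq_univ_of_forall fun v => ?_
  obtain ⟨p⟩ := hG u v
  induction p with
  | nil => exact hu
  | cons hadj _ ih => exact ih (h _ hu _ hadj)

theorem ncard_neighborSet_cycleGraph_le (m : ℕ) (v : Fin m) :
    ((cycleGraph m).neighborSet v).ncard ≤ 2 := by
  match m with
  | 0 => exact v.elim0
  | 1 => simp [cycleGraph_one_eq_bot]
  | n + 2 => rw [cycleGraph_neighborSet]; exact (ncard_insert_le _ _).trans (by simp)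

theorem ncard_closedNbhd {β : Type*} [Finite β] (H : SimpleGraph β) (b : β) :
    (closedNbhd H b).ncard = (H.neighborSet b).ncard + 1 :=
  ncard_insert_of_notMem H.notMem_neighborSet_self

theorem closedNbhd_lexProd {α β : Type*} (G : SimpleGraph α) (H : SimpleGraph β) (a : α)
    (b : β) :
    closedNbhd (lexProd G H) (a, b) = G.neighborSet a ×ˢ univ ∪ {a} ×ˢ closedNbhd H b := by
  ext ⟨a', b'⟩
  simp only [closedNbhd, lexProd, mem_insert_iff, mem_neighborSet, Prod.mk.injEq, mem_union,
    mem_prod, mem_univ, and_true, mem_singleton_iff]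
  tauto

theorem ncard_singleton_prod_inter {α β : Type*} (a : α) (C : Set β) (T : Set (α × β)) :
    ({a} ×ˢ C ∩ T).ncard = (C ∩ Prod.mk a ⁻¹' T).ncard := by
  rw [← ncard_image_of_injective (C ∩ Prod.mk a ⁻¹' T) (Prod.mk_right_injective a)]
  congr 1
  ext ⟨a', b'⟩
  simp only [mem_inter_iff, mem_prod, mem_singleton_iff, mem_image, mem_preimage, Prod.mk.injEq]
  constructor
  · rintro ⟨⟨rfl, hb⟩, hT⟩
    exact ⟨b', ⟨hb, hT⟩, rfl, rfl⟩
  · rintro ⟨b, ⟨hb, hT⟩, rfl, rfl⟩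
    exact ⟨⟨rfl, hb⟩, hT⟩

theorem ncard_closedNbhd_lexProd_pathGraph_two_inter {β : Type*} [Finite β] (H : SimpleGraph β)
    {a a' : Fin 2} (h : a ≠ a') (b : β) (T : Set (Fin 2 × β)) :
    (closedNbhd (lexProd (pathGraph 2) H) (a, b) ∩ T).ncard =
      (Prod.mk a' ⁻¹' T).ncard + (closedNbhd H b ∩ Prod.mk a ⁻¹' T).ncard := by
  have hnbr : (pathGraph 2).neighborSet a = {a'} := by
    ext c
    rw [mem_neighborSet, pathGraph_two_eq_top, top_adj, mem_singleton_iff]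
    revert a a' c
    decide
  have hdisj : Disjoint ({a'} ×ˢ univ ∩ T) ({a} ×ˢ closedNbhd H b ∩ T) :=
    (disjoint_singleton.mpr h.symm).set_prod_left _ _ |>.mono inter_subset_left inter_subset_left
  rw [closedNbhd_lexProd, hnbr, union_inter_distrib_right, ncard_union_eq hdisj,
    ncard_singleton_prod_inter, ncard_singleton_prod_inter, univ_inter]

theorem isDefensiveAlliance_lexProd_pathGraph_two_iff {β : Type*} [Finite β] (H : SimpleGraph β)
    (S : Set (Fin 2 × β)) :
    IsDefensiveAlliance (lexProd (pathGraph 2) H) S ↔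
      ∀ a a', a ≠ a' → ∀ b ∈ Prod.mk a ⁻¹' S, Nat.card β + (closedNbhd H b).ncard ≤
        2 * (Prod.mk a' ⁻¹' S).ncard + 2 * (closedNbhd H b ∩ Prod.mk a ⁻¹' S).ncard := by
  have key : ∀ a a', a ≠ a' → ∀ b,
      ((closedNbhd (lexProd (pathGraph 2) H) (a, b) \ S).ncard ≤
        (closedNbhd (lexProd (pathGraph 2) H) (a, b) ∩ S).ncard ↔
      Nat.card β + (closedNbhd H b).ncard ≤
        2 * (Prod.mk a' ⁻¹' S).ncard + 2 * (closedNbhd H b ∩ Prod.mk a ⁻¹' S).ncard) := by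
    intro a a' h b
    have hfib := ncard_add_ncard_compl (Prod.mk a' ⁻¹' S)
    have hloc := ncard_inter_add_ncard_sdiff_eq_ncard (closedNbhd H b) (Prod.mk a ⁻¹' S)
    rw [sdiff_eq, ncard_closedNbhd_lexProd_pathGraph_two_inter H h,
      ncard_closedNbhd_lexProd_pathGraph_two_inter H h, preimage_compl, preimage_compl,
      ← sdiff_eq]
    omega
  constructor
  · intro hS a a' h b hb
    exact (key a a' h b).mp (hS (a, b) hb)
  · rintro hS ⟨a, b⟩ hb
    obtain ⟨a', h⟩ := exists_ne a
    exact (key a a' h.symm b).mpr (hS a a' h.symm b hb)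

theorem ncard_eq_ncard_preimage_zero_add_ncard_preimage_one {β : Type*} [Finite β]
    (S : Set (Fin 2 × β)) :
    S.ncard = (Prod.mk 0 ⁻¹' S).ncard + (Prod.mk 1 ⁻¹' S).ncard := by
  have hcover : S = {0} ×ˢ univ ∩ S ∪ {1} ×ˢ univ ∩ S := by
    ext ⟨a, b⟩
    fin_cases a <;> simp
  have hdisj : Disjoint ({0} ×ˢ univ ∩ S) ({1} ×ˢ (univ : Set β) ∩ S) :=
    (disjoint_singleton.mpr (by decide)).set_prod_left _ _ |>.mono inter_subset_left
      inter_subset_left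
  conv_lhs => rw [hcover, ncard_union_eq hdisj]
  rw [ncard_singleton_prod_inter, ncard_singleton_prod_inter, univ_inter, univ_inter]

theorem two_le_ncard_closedNbhd_inter {β : Type*} [Finite β] {H : SimpleGraph β} {T : Set β}
    {b b' : β} (hb : b ∈ T) (hb' : b' ∈ T) (hadj : H.Adj b b') :
    2 ≤ (closedNbhd H b ∩ T).ncard := by
  have hsub : ({b, b'} : Set β) ⊆ closedNbhd H b ∩ T := by
    rintro c (rfl | rfl)
    exacts [⟨mem_insert c _, hb⟩, ⟨mem_insert_of_mem _ hadj, hb'⟩]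
  rw [← ncard_pair hadj.ne]
  exact ncard_le_ncard hsub

section LexProdPathGraphTwo

variable {β : Type*} [Finite β] {H : SimpleGraph β} {S : Set (Fin 2 × β)}

theorem IsDefensiveAlliance.nonempty_preimage_of_ne
    (hS : IsDefensiveAlliance (lexProd (pathGraph 2) H) S)
    (hdeg : ∀ b, (H.neighborSet b).ncard ≤ 2) (hcard : 4 ≤ Nat.card β) {a a' : Fin 2}
    (h : a ≠ a') (hne : (Prod.mk a ⁻¹' S).Nonempty) : (Prod.mk a' ⁻¹' S).Nonempty := by
  obtain ⟨b, hb⟩ := hne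
  have hdef := (isDefensiveAlliance_lexProd_pathGraph_two_iff H S).mp hS a a' h b hb
  have hloc := ncard_inter_le_ncard_left (closedNbhd H b) (Prod.mk a ⁻¹' S)
  have hN := ncard_closedNbhd H b
  have hdegb := hdeg b
  rw [← ncard_pos]
  omega

theorem IsDefensiveAlliance.preimage_eq_univ
    (hS : IsDefensiveAlliance (lexProd (pathGraph 2) H) S)
    (hH : H.Preconnected) (hdeg : ∀ b, (H.neighborSet b).ncard ≤ 2) {a a' : Fin 2}
    (h : a ≠ a') (hsmall : 2 * (Prod.mk a' ⁻¹' S).ncard + 2 ≤ Nat.card β)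
    (hne : (Prod.mk a ⁻¹' S).Nonempty) :
    Prod.mk a ⁻¹' S = univ := by
  refine hH.eq_univ_of_forall_adj_mem hne fun b hb b' hadj => ?_
  have hdef := (isDefensiveAlliance_lexProd_pathGraph_two_iff H S).mp hS a a' h b hb
  have hloc := ncard_inter_le_ncard_left (closedNbhd H b) (Prod.mk a ⁻¹' S)
  have hN := ncard_closedNbhd H b
  have hdegb := hdeg b
  have hfull : closedNbhd H b ⊆ Prod.mk a ⁻¹' S :=
    inter_eq_left.mp (eq_of_subset_of_ncard_le inter_subset_left (by omega))
  exact hfull (mem_insert_of_mem _ hadj)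

theorem IsGDA.two_mul_half_card_le_ncard (hS : IsGDA (lexProd (pathGraph 2) H) S)
    (hH : H.Preconnected) (hdeg : ∀ b, (H.neighborSet b).ncard ≤ 2)
    (hcard : 4 ≤ Nat.card β) :
    2 * (Nat.card β / 2) ≤ S.ncard := by
  obtain ⟨hda, hdom⟩ := hS
  obtain ⟨b⟩ : Nonempty β := Nat.card_pos_iff.mp (by omega) |>.1
  obtain ⟨⟨a, b⟩, hab⟩ : S.Nonempty := by
    rcases hdom (0, b) with h | ⟨u, hu, -⟩
    exacts [⟨_, h⟩, ⟨u, hu⟩]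
  have hfib : ∀ c, (Prod.mk c ⁻¹' S).Nonempty := by
    intro c
    by_cases hc : c = a
    · exact hc ▸ ⟨b, hab⟩
    · exact hda.nonempty_preimage_of_ne hdeg hcard (Ne.symm hc) ⟨b, hab⟩
  have hfull : ∀ c c', c ≠ c' → 2 * (Prod.mk c' ⁻¹' S).ncard + 2 ≤ Nat.card β →
      (Prod.mk c ⁻¹' S).ncard = Nat.card β := fun c c' h hsmall => by
    rw [hda.preimage_eq_univ hH hdeg h hsmall (hfib c), ncard_univ]
  have h01 := hfull 0 1 (by decide)
  have h10 := hfull 1 0 (by decide)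
  rw [ncard_eq_ncard_preimage_zero_add_ncard_preimage_one]
  omega

theorem isGDA_univ_prod {T : Set β} (hT : T.Nonempty)
    (hdef : ∀ b ∈ T,
      Nat.card β + (closedNbhd H b).ncard ≤ 2 * T.ncard + 2 * (closedNbhd H b ∩ T).ncard) :
    IsGDA (lexProd (pathGraph 2) H) (univ ×ˢ T) := by
  refine ⟨(isDefensiveAlliance_lexProd_pathGraph_two_iff H _).mpr fun a a' _ b hb => ?_, ?_⟩
  · simp only [mk_preimage_prod_right (mem_univ _)] at hb ⊢
    exact hdef b hb
  · rintro ⟨a, b⟩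
    by_cases hb : b ∈ T
    · exact Or.inl ⟨mem_univ a, hb⟩
    · obtain ⟨t, ht⟩ := hT
      obtain ⟨a', h⟩ := exists_ne a
      refine Or.inr ⟨(a', t), ⟨mem_univ a', ht⟩, Or.inl ?_⟩
      rw [pathGraph_two_eq_top]
      exact h.symm

end LexProdPathGraphTwo

theorem exists_adj_cycleGraph_of_val_lt_half {m : ℕ} (hm : 4 ≤ m) {b : Fin m}
    (hb : b.val < m / 2) :
    ∃ b' : Fin m, b'.val < m / 2 ∧ (cycleGraph m).Adj b b' := by
  rcases lt_or_ge (b.val + 1) (m / 2) with h | h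
  · exact ⟨⟨b + 1, by omega⟩, h, pathGraph_le_cycleGraph (by simp [pathGraph_adj])⟩
  · exact ⟨⟨b - 1, by omega⟩, by simp only; omega,
      pathGraph_le_cycleGraph (by simp only [pathGraph_adj]; omega)⟩

theorem Fin.ncard_setOf_val_lt {m k : ℕ} (hk : k ≤ m) : {j : Fin m | j.val < k}.ncard = k := by
  rw [show {j : Fin m | j.val < k} = Fin.val ⁻¹' Iio k from rfl,
    ncard_preimage_of_injective_subset_range Fin.val_injective, ncard_Iio_nat]
  intro j hj
  exact ⟨⟨j, by simp only [mem_Iio] at hj; omega⟩, rfl⟩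

theorem isGDA_univ_prod_cycleGraph {m : ℕ} (hm : 4 ≤ m) :
    IsGDA (lexProd (pathGraph 2) (cycleGraph m)) (univ ×ˢ {j : Fin m | j.val < m / 2}) := by
  refine isGDA_univ_prod ⟨⟨0, by omega⟩, Nat.div_pos (by omega) two_pos⟩ fun b hb => ?_
  obtain ⟨b', hb', hadj⟩ := exists_adj_cycleGraph_of_val_lt_half hm hb
  have hloc := two_le_ncard_closedNbhd_inter hb hb' hadj
  have hN := ncard_closedNbhd (cycleGraph m) b
  have hdegb := ncard_neighborSet_cycleGraph_le m b
  rw [Fin.ncard_setOf_val_lt (Nat.div_le_self m 2), Nat.card_fin]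
  omega

theorem stmt_4 (m : ℕ) (hm : 4 ≤ m) :
    gdaNumber (lexProd (SimpleGraph.pathGraph 2) (SimpleGraph.cycleGraph m)) = 2 * (m / 2) := by
  refine IsLeast.csInf_eq ⟨⟨_, isGDA_univ_prod_cycleGraph hm, ?_⟩, ?_⟩
  · rw [ncard_prod, ncard_univ, Nat.card_fin, Fin.ncard_setOf_val_lt (Nat.div_le_self m 2)]
  · rintro _ ⟨S, hS, rfl⟩
    simpa only [Nat.card_fin] using hS.two_mul_half_card_le_ncard cycleGraph_preconnected
      (ncard_neighborSet_cycleGraph_le m) ((Nat.card_fin m).symm ▸ hm)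
end

section
/- For every m ≥ 4, the global defensive alliance number of P₄ ∘ Cₘ equals 2m − 1. -/
/-!
Write `S_a` for the part of `S` in the copy of `Cₘ` over the vertex `a` of `P₄ = 0 - 1 - 2 - 3`.
The closed neighbourhood of `(a, b)` is the union of the whole copies over the neighbours of `a`
with `N[b]` inside the copy over `a`, so defending `(a, b)` only involves the sizes `|S_a'|` and
`|N[b] ∩ S_a|`. All of copy `1` together with all but one vertex of copy `2` is a global defensive
alliance of size `2m - 1`. Conversely, domination and the defence of the leaf copies force `S` to
meet copies `1` and `2`; defending a vertex there gives `|S_0| + |S_2| ≥ m - 1` and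
`|S_1| + |S_3| ≥ m - 1`. If `|S| ≤ 2m - 2` both are tight, and tightness makes `S_1` contain the
closed neighbourhood of each of its vertices; as `Cₘ` is connected, `S_1` is then the whole copy,
which contradicts tightness.
-/

open SimpleGraph Set

instance (n : ℕ) : DecidableRel (pathGraph n).Adj := fun _ _ => decidable_of_iff' _ pathGraph_adj

section ClosedNbhd

variable {α : Type*} {G : SimpleGraph α}

variable (G) in
lemma ncard_closedNbhd_s5 (v : α) [Fintype (G.neighborSet v)] :
    (closedNbhd G v).ncard = G.degree v + 1 := by
  rw [closedNbhd, ncard_insert_of_notMem G.notMem_neighborSet_self, ncard_eq_toFinset_card']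
  rfl

variable (G) in
lemma ncard_closedNbhd_inter_le (v : α) [Fintype (G.neighborSet v)] (T : Set α) :
    (closedNbhd G v ∩ T).ncard ≤ G.degree v + 1 :=
  ncard_closedNbhd_s5 G v ▸ ncard_le_ncard inter_subset_left ((G.neighborSet v).toFinite.insert v)

lemma isDefensiveAlliance_iff [Finite α] {S : Set α} :
    IsDefensiveAlliance G S ↔ ∀ v ∈ S, (closedNbhd G v).ncard ≤ 2 * (closedNbhd G v ∩ S).ncard := by
  refine forall₂_congr fun v _ => ?_
  have := ncard_inter_add_ncard_sdiff_eq_ncard (closedNbhd G v) S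
  omega

lemma isGDA_univ : IsGDA G univ :=
  ⟨fun v _ => by simp, fun _ => Or.inl trivial⟩

lemma gdaNumber_le {S : Set α} (hS : IsGDA G S) : gdaNumber G ≤ S.ncard :=
  Nat.sInf_le ⟨S, hS, rfl⟩

lemma le_gdaNumber {k : ℕ} (h : ∀ S, IsGDA G S → k ≤ S.ncard) : k ≤ gdaNumber G :=
  le_csInf ⟨_, univ, isGDA_univ, rfl⟩ (by rintro _ ⟨S, hS, rfl⟩; exact h S hS)

lemma SimpleGraph.Preconnected.eq_univ_of_closedNbhd_subset (hG : G.Preconnected) {T : Set α}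
    (hT : T.Nonempty) (hcl : ∀ v ∈ T, closedNbhd G v ⊆ T) : T = univ := by
  obtain ⟨u, hu⟩ := hT
  refine eq_univ_of_forall fun v => ?_
  obtain ⟨p⟩ := hG u v
  induction p with
  | nil => exact hu
  | cons h _ ih => exact ih (hcl _ hu (Or.inr h))

end ClosedNbhd

section LexProd

variable {α β : Type*}

lemma ncard_eq_sum_ncard_preimage_mk [Fintype α] [Finite β] (T : Set (α × β)) :
    T.ncard = ∑ a, (Prod.mk a ⁻¹' T).ncard := by
  let e : T ≃ Σ a, ↥(Prod.mk a ⁻¹' T) :=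
    { toFun := fun p => ⟨p.1.1, p.1.2, p.2⟩
      invFun := fun q => ⟨(q.1, q.2.1), q.2.2⟩
      left_inv := fun _ => rfl
      right_inv := fun _ => rfl }
  rw [← Nat.card_coe_set_eq, Nat.card_congr e, Nat.card_sigma]
  rfl

variable {G : SimpleGraph α} {H : SimpleGraph β}

lemma preimage_mk_closedNbhd_lexProd [DecidableEq α] [DecidableRel G.Adj] (a a' : α) (b : β) :
    Prod.mk a' ⁻¹' closedNbhd (lexProd G H) (a, b) =
      if a' = a then closedNbhd H b else if G.Adj a a' then univ else ∅ := by
  ext b'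
  split_ifs with h h' <;> simp_all [closedNbhd, lexProd, eq_comm]

lemma ncard_closedNbhd_lexProd_inter [Fintype α] [DecidableRel G.Adj] [Finite β]
    (S : Set (α × β)) (a : α) (b : β) :
    (closedNbhd (lexProd G H) (a, b) ∩ S).ncard =
      ∑ a' ∈ G.neighborFinset a, (Prod.mk a' ⁻¹' S).ncard +
        (closedNbhd H b ∩ Prod.mk a ⁻¹' S).ncard := by
  classical
  have hfiber (a' : α) : (Prod.mk a' ⁻¹' (closedNbhd (lexProd G H) (a, b) ∩ S)).ncard =
      (if a' = a then (closedNbhd H b ∩ Prod.mk a ⁻¹' S).ncard else 0) +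
        (if G.Adj a a' then (Prod.mk a' ⁻¹' S).ncard else 0) := by
    rw [preimage_inter, preimage_mk_closedNbhd_lexProd]
    split_ifs with h h' h' <;> simp_all
  rw [ncard_eq_sum_ncard_preimage_mk, Finset.sum_congr rfl fun a' _ => hfiber a',
    Finset.sum_add_distrib, Finset.sum_ite_eq', if_pos (Finset.mem_univ a),
    neighborFinset_eq_filter, Finset.sum_filter, add_comm]

variable [Fintype α] [DecidableRel G.Adj] [Fintype β] [DecidableRel H.Adj]

lemma ncard_closedNbhd_lexProd (a : α) (b : β) :
    (closedNbhd (lexProd G H) (a, b)).ncard = G.degree a * Fintype.card β + H.degree b + 1 := by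
  have h := ncard_closedNbhd_lexProd_inter (G := G) (H := H) univ a b
  simp only [inter_univ, preimage_univ, ncard_univ, Nat.card_eq_fintype_card, Finset.sum_const,
    card_neighborFinset_eq_degree, smul_eq_mul, ncard_closedNbhd_s5] at h
  omega

lemma isDefensiveAlliance_lexProd_iff {S : Set (α × β)} :
    IsDefensiveAlliance (lexProd G H) S ↔ ∀ a b, (a, b) ∈ S →
      G.degree a * Fintype.card β + H.degree b + 1 ≤
        2 * (∑ a' ∈ G.neighborFinset a, (Prod.mk a' ⁻¹' S).ncard +
          (closedNbhd H b ∩ Prod.mk a ⁻¹' S).ncard) := by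
  simp only [isDefensiveAlliance_iff, Prod.forall, ncard_closedNbhd_lexProd,
    ncard_closedNbhd_lexProd_inter]

variable {S : Set (α × β)} {a : α} {b : β}

lemma IsDefensiveAlliance.card_le_sum_add_one (hS : IsDefensiveAlliance (lexProd G H) S)
    (hH : ∀ b, H.degree b ≤ 2) (ha : G.degree a = 2) (hab : (a, b) ∈ S) :
    Fintype.card β ≤ ∑ a' ∈ G.neighborFinset a, (Prod.mk a' ⁻¹' S).ncard + 1 := by
  have hdef := (isDefensiveAlliance_lexProd_iff (G := G)).1 hS a b hab
  have := ncard_closedNbhd_inter_le H b (Prod.mk a ⁻¹' S)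
  have := hH b
  rw [ha] at hdef
  omega

lemma IsDefensiveAlliance.closedNbhd_subset_of_sum_lt (hS : IsDefensiveAlliance (lexProd G H) S)
    (hH : ∀ b, H.degree b ≤ 2) (ha : G.degree a = 2) (hab : (a, b) ∈ S)
    (hlt : ∑ a' ∈ G.neighborFinset a, (Prod.mk a' ⁻¹' S).ncard < Fintype.card β) :
    closedNbhd H b ⊆ Prod.mk a ⁻¹' S := by
  have hdef := (isDefensiveAlliance_lexProd_iff (G := G)).1 hS a b hab
  have := ncard_closedNbhd_inter_le H b (Prod.mk a ⁻¹' S)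
  have := hH b
  rw [ha] at hdef
  refine inter_eq_left.1 (eq_of_subset_of_ncard_le inter_subset_left ?_)
  rw [ncard_closedNbhd_s5]
  omega

lemma IsGDA.exists_mem_of_neighborFinset_eq_singleton (hS : IsGDA (lexProd G H) S)
    (hH : ∀ b, H.degree b ≤ 2) (hcard : 4 ≤ Fintype.card β) {a' : α}
    (ha : G.neighborFinset a = {a'}) : ∃ b, (a', b) ∈ S := by
  by_contra! h
  have hempty : Prod.mk a' ⁻¹' S = ∅ := eq_empty_of_forall_notMem h
  by_cases hcopy : ∃ b, (a, b) ∈ S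
  · obtain ⟨b, hb⟩ := hcopy
    have hdef := (isDefensiveAlliance_lexProd_iff (G := G)).1 hS.1 a b hb
    rw [← card_neighborFinset_eq_degree, ha, Finset.card_singleton, Finset.sum_singleton, hempty,
      ncard_empty] at hdef
    have := ncard_closedNbhd_inter_le H b (Prod.mk a ⁻¹' S)
    have := hH b
    omega
  · push Not at hcopy
    obtain ⟨b⟩ : Nonempty β := Fintype.card_pos_iff.1 (by omega)
    rcases hS.2 (a, b) with hin | ⟨⟨a'', b'⟩, hu, hadj | ⟨rfl, -⟩⟩
    · exact hcopy b hin
    · rw [← mem_neighborFinset, ha, Finset.mem_singleton] at hadj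
      exact h b' (hadj ▸ hu)
    · exact hcopy b' hu

end LexProd

section PathFour

variable {β : Type*} {H : SimpleGraph β}

def pathFourAlliance (b₀ : β) : Set (Fin 4 × β) := {p | p.1 = 1 ∨ p.1 = 2 ∧ p.2 ≠ b₀}

lemma preimage_mk_pathFourAlliance (b₀ : β) (a : Fin 4) :
    Prod.mk a ⁻¹' pathFourAlliance b₀ = if a = 1 then univ else if a = 2 then {b₀}ᶜ else ∅ := by
  ext b
  fin_cases a <;> simp [pathFourAlliance]

variable [Fintype β] [DecidableRel H.Adj]

lemma ncard_compl_singleton (b₀ : β) : ({b₀}ᶜ : Set β).ncard = Fintype.card β - 1 := by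
  rw [ncard_compl, ncard_singleton, Nat.card_eq_fintype_card]

lemma ncard_pathFourAlliance (b₀ : β) : (pathFourAlliance b₀).ncard = 2 * Fintype.card β - 1 := by
  have := Fintype.card_pos_iff.2 ⟨b₀⟩
  rw [ncard_eq_sum_ncard_preimage_mk, Fin.sum_univ_four]
  simp only [preimage_mk_pathFourAlliance, Fin.reduceEq, ↓reduceIte, ncard_empty, ncard_univ,
    Nat.card_eq_fintype_card, ncard_compl_singleton]
  omega

lemma isGDA_pathFourAlliance (hdeg : ∀ b, 0 < H.degree b) (b₀ : β) :
    IsGDA (lexProd (pathGraph 4) H) (pathFourAlliance b₀) := by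
  have := Fintype.card_pos_iff.2 ⟨b₀⟩
  refine ⟨isDefensiveAlliance_lexProd_iff.2 ?_, ?_⟩
  · rintro a b (rfl | ⟨rfl, -⟩) <;> have := hdeg b
    · rw [(by decide : (pathGraph 4).neighborFinset 1 = {0, 2}), Finset.sum_pair (by decide)]
      simp only [(by decide : (pathGraph 4).degree 1 = 2), preimage_mk_pathFourAlliance,
        Fin.reduceEq, ↓reduceIte, ncard_empty, ncard_compl_singleton, inter_univ, ncard_closedNbhd_s5]
      omega
    · have hle := ncard_le_ncard_sdiff_add_ncard (closedNbhd H b) {b₀}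
      rw [ncard_closedNbhd_s5, ncard_singleton, sdiff_eq] at hle
      rw [(by decide : (pathGraph 4).neighborFinset 2 = {1, 3}), Finset.sum_pair (by decide)]
      simp only [(by decide : (pathGraph 4).degree 2 = 2), preimage_mk_pathFourAlliance,
        Fin.reduceEq, ↓reduceIte, ncard_empty, ncard_univ, Nat.card_eq_fintype_card]
      omega
  · rintro ⟨a, b⟩
    obtain ⟨b', hb'⟩ := (H.degree_pos_iff_exists_adj b₀).1 (hdeg b₀)
    fin_cases a
    · exact Or.inr ⟨(1, b), Or.inl rfl, Or.inl (by decide : (pathGraph 4).Adj 0 1)⟩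
    · exact Or.inl (Or.inl rfl)
    · exact Or.inr ⟨(1, b), Or.inl rfl, Or.inl (by decide : (pathGraph 4).Adj 2 1)⟩
    · exact Or.inr ⟨(2, b'), Or.inr ⟨rfl, hb'.ne'⟩, Or.inl (by decide : (pathGraph 4).Adj 3 2)⟩

lemma IsGDA.two_mul_card_sub_one_le_ncard {S : Set (Fin 4 × β)}
    (hS : IsGDA (lexProd (pathGraph 4) H) S) (hH : H.Preconnected) (hdeg : ∀ b, H.degree b ≤ 2)
    (hcard : 4 ≤ Fintype.card β) : 2 * Fintype.card β - 1 ≤ S.ncard := by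
  have hN₁ : (pathGraph 4).neighborFinset 1 = {0, 2} := by decide
  have hN₂ : (pathGraph 4).neighborFinset 2 = {1, 3} := by decide
  have hdeg₁ : (pathGraph 4).degree 1 = 2 := by decide
  obtain ⟨j₁, hj₁⟩ :=
    hS.exists_mem_of_neighborFinset_eq_singleton (a := 0) (a' := 1) hdeg hcard (by decide)
  obtain ⟨j₂, hj₂⟩ :=
    hS.exists_mem_of_neighborFinset_eq_singleton (a := 3) (a' := 2) hdeg hcard (by decide)
  have h₀₂ := hS.1.card_le_sum_add_one hdeg hdeg₁ hj₁
  have h₁₃ := hS.1.card_le_sum_add_one hdeg (by decide) hj₂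
  rw [hN₁, Finset.sum_pair (by decide)] at h₀₂
  rw [hN₂, Finset.sum_pair (by decide)] at h₁₃
  have hsum := ncard_eq_sum_ncard_preimage_mk S
  rw [Fin.sum_univ_four] at hsum
  by_contra! hlt
  have hfull : Prod.mk 1 ⁻¹' S = univ := hH.eq_univ_of_closedNbhd_subset ⟨j₁, hj₁⟩ fun b hb =>
    hS.1.closedNbhd_subset_of_sum_lt hdeg hdeg₁ hb (by rw [hN₁, Finset.sum_pair (by decide)]; omega)
  rw [hfull, ncard_univ, Nat.card_eq_fintype_card] at hsum
  omega

end PathFour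

theorem stmt_5 (m : ℕ) (hm : 4 ≤ m) :
    gdaNumber (lexProd (SimpleGraph.pathGraph 4) (SimpleGraph.cycleGraph m)) = 2 * m - 1 := by
  obtain ⟨n, rfl⟩ := Nat.exists_eq_add_of_le' hm
  have hdeg (b : Fin (n + 4)) : (cycleGraph (n + 4)).degree b = 2 :=
    cycleGraph_degree_three_le (n := n + 1)
  have hcard : Fintype.card (Fin (n + 4)) = n + 4 := Fintype.card_fin _
  refine le_antisymm ?_ (le_gdaNumber fun S hS => ?_)
  · calc gdaNumber _ ≤ (pathFourAlliance (0 : Fin (n + 4))).ncard :=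
          gdaNumber_le (isGDA_pathFourAlliance (by simp [hdeg]) 0)
      _ = 2 * (n + 4) - 1 := by rw [ncard_pathFourAlliance, hcard]
  · simpa [hcard] using
      hS.two_mul_card_sub_one_le_ncard cycleGraph_preconnected (fun b => (hdeg b).le) (by omega)
end

section
/- For every n ≥ 3 and m ≥ 3, γₐ(Pₙ ∘ Pₘ) ≤ γₐ(Cₙ ∘ Pₘ) ≤ γₐ(Cₙ ∘ Cₘ). -/
open SimpleGraph Set
open Fin.CommRing

section General

lemma univ_isGDA {α : Type*} (G : SimpleGraph α) : IsGDA G (Set.univ : Set α) := by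
  refine ⟨fun v _ => ?_, fun v => Or.inl (Set.mem_univ v)⟩
  simp

lemma gdaNumber_le_of_transfer {α β : Type*} (G : SimpleGraph α) (H : SimpleGraph β)
    (h : ∀ S : Set β, IsGDA H S → ∃ T : Set α, IsGDA G T ∧ T.ncard = S.ncard) :
    gdaNumber G ≤ gdaNumber H := by
  have hne : {k | ∃ S : Set β, IsGDA H S ∧ S.ncard = k}.Nonempty :=
    ⟨_, Set.univ, univ_isGDA H, rfl⟩
  obtain ⟨S, hS, hcard⟩ := Nat.sInf_mem hne
  obtain ⟨T, hT, hTS⟩ := h S hS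
  rw [gdaNumber, gdaNumber]
  exact Nat.sInf_le ⟨T, hT, by rw [hTS, hcard]⟩

end General

section FinLemmas

variable {K : ℕ}

lemma fin_one_ne_zero' : (1 : Fin (K+3)) ≠ 0 := by
  simp [Fin.ext_iff]

lemma fin_two_ne_zero' : (2 : Fin (K+3)) ≠ 0 := by
  simp [Fin.ext_iff, Fin.val_two, Nat.mod_eq_of_lt (show 2 < K+3 by omega)]

lemma fin_sub_one_ne_self (a : Fin (K+3)) : a - 1 ≠ a := by
  intro h
  exact fin_one_ne_zero' (left_eq_add.mp (sub_eq_iff_eq_add.mp h))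

lemma fin_add_one_ne_self (a : Fin (K+3)) : a + 1 ≠ a := by
  intro h
  exact fin_one_ne_zero' (left_eq_add.mp h.symm)

lemma fin_sub_one_ne_add_one (a : Fin (K+3)) : a - 1 ≠ a + 1 := by
  intro h
  have h2 : a = a + (1 + 1) := by
    rw [← add_assoc]
    exact sub_eq_iff_eq_add.mp h
  have h3 : (1 : Fin (K+3)) + 1 = 0 := left_eq_add.mp h2
  exact fin_two_ne_zero' (by rw [one_add_one_eq_two] at h3; exact h3)

lemma fin_val_succ_iff (u v : Fin (K+3)) :
    (u : ℕ) + 1 = (v : ℕ) ↔ v = u + 1 ∧ u ≠ Fin.last (K+2) := by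
  constructor
  · intro h
    have hv := v.isLt
    have hne : u ≠ Fin.last (K+2) := by
      intro hu
      rw [hu] at h
      simp [Fin.last] at h
      omega
    refine ⟨?_, hne⟩
    apply Fin.ext
    rw [Fin.val_add_one, if_neg hne, h]
  · rintro ⟨rfl, hne⟩
    rw [Fin.val_add_one, if_neg hne]

lemma fin_cycle_adj (u v : Fin (K+3)) :
    (SimpleGraph.cycleGraph (K+3)).Adj u v ↔ v = u + 1 ∨ u = v + 1 := by
  rw [show (K+3) = (K+1)+2 by ring] at *
  rw [SimpleGraph.cycleGraph_adj]
  constructor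
  · rintro (h | h)
    · exact Or.inr (by rw [sub_eq_iff_eq_add] at h; rw [h]; ring)
    · exact Or.inl (by rw [sub_eq_iff_eq_add] at h; rw [h]; ring)
  · rintro (rfl | rfl)
    · exact Or.inr (by ring)
    · exact Or.inl (by ring)

lemma fin_path_adj (u v : Fin (K+3)) :
    (SimpleGraph.pathGraph (K+3)).Adj u v ↔
      (v = u + 1 ∧ u ≠ Fin.last (K+2)) ∨ (u = v + 1 ∧ v ≠ Fin.last (K+2)) := by
  rw [SimpleGraph.pathGraph_adj, fin_val_succ_iff, fin_val_succ_iff]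

lemma fin_path_adj_of_cycle_adj {u v : Fin (K+3)}
    (h : (SimpleGraph.pathGraph (K+3)).Adj u v) :
    (SimpleGraph.cycleGraph (K+3)).Adj u v := by
  rw [fin_path_adj] at h
  rw [fin_cycle_adj]
  tauto

lemma fin_eq_last_iff (a k : Fin (K+3)) : a - k = Fin.last (K+2) ↔ a = k - 1 := by
  rw [sub_eq_iff_eq_add]
  constructor
  · rintro rfl
    rw [show Fin.last (K+2) = (-1 : Fin (K+3)) from Fin.ext (by rw [Fin.coe_neg_one]; rfl)]
    ring
  · rintro rfl
    rw [show Fin.last (K+2) = (-1 : Fin (K+3)) from Fin.ext (by rw [Fin.coe_neg_one]; rfl)]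
    ring

/-- Path adjacency of rotated vertices, in terms of cycle adjacency avoiding the cut
edge between `k - 1` and `k`. -/
lemma fin_rot_path_adj (k x y : Fin (K+3)) :
    (SimpleGraph.pathGraph (K+3)).Adj (x - k) (y - k) ↔
      ((SimpleGraph.cycleGraph (K+3)).Adj x y ∧
        ¬(x = k - 1 ∧ y = k) ∧ ¬(y = k - 1 ∧ x = k)) := by
  rw [fin_path_adj, fin_cycle_adj]
  have hsub : ∀ a b : Fin (K+3), (b - k = a - k + 1) ↔ b = a + 1 := by
    intro a b
    rw [sub_add_eq_add_sub, sub_left_inj]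
  have hlast : ∀ a : Fin (K+3), (a - k = Fin.last (K+2)) ↔ a = k - 1 := fun a => fin_eq_last_iff a k
  have hk : ∀ a : Fin (K+3), a = k - 1 → (a + 1 = k) := by
    intro a ha; rw [ha]; ring
  have hk' : ∀ a : Fin (K+3), a + 1 = k → a = k - 1 := by
    intro a ha; rw [← ha]; ring
  constructor
  · rintro (⟨h1, h2⟩ | ⟨h1, h2⟩)
    · rw [hsub] at h1
      rw [Ne, hlast] at h2
      refine ⟨Or.inl h1, fun hc => h2 hc.1, fun hc => ?_⟩
      exact fin_sub_one_ne_add_one k (hc.1.symm.trans (h1.trans (by rw [hc.2])))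
    · rw [hsub] at h1
      rw [Ne, hlast] at h2
      refine ⟨Or.inr h1, fun hc => ?_, fun hc => h2 hc.1⟩
      exact fin_sub_one_ne_add_one k (hc.1.symm.trans (h1.trans (by rw [hc.2])))
  · rintro ⟨h1 | h1, h2, h3⟩
    · left
      rw [hsub, Ne, hlast]
      exact ⟨h1, fun hx => h2 ⟨hx, by rw [h1, hx]; ring⟩⟩
    · right
      rw [hsub, Ne, hlast]
      exact ⟨h1, fun hy => h3 ⟨hy, by rw [h1, hy]; ring⟩⟩

section Cols

variable {N M : ℕ}

/-- The `j`-th column (copy of the second factor). -/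
def col (j : Fin (N+3)) : Set (Fin (N+3) × Fin (M+3)) := {p | p.1 = j}

/-- A subset of the `a`-th column given by a set of second coordinates. -/
def box (a : Fin (N+3)) (t : Set (Fin (M+3))) : Set (Fin (N+3) × Fin (M+3)) :=
  {p | p.1 = a ∧ p.2 ∈ t}

lemma col_eq_image (j : Fin (N+3)) :
    (col j : Set (Fin (N+3) × Fin (M+3))) = (fun b => (j, b)) '' Set.univ := by
  ext ⟨c, d⟩
  simp [col, eq_comm]

lemma box_eq_image (a : Fin (N+3)) (t : Set (Fin (M+3))) :
    (box a t : Set (Fin (N+3) × Fin (M+3))) = (fun b => (a, b)) '' t := by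
  ext ⟨c, d⟩
  constructor
  · rintro ⟨rfl, hd⟩
    exact ⟨d, hd, rfl⟩
  · rintro ⟨b, hb, h⟩
    cases h
    exact ⟨rfl, hb⟩

lemma ncard_col (j : Fin (N+3)) : (col j : Set (Fin (N+3) × Fin (M+3))).ncard = M + 3 := by
  rw [col_eq_image, Set.ncard_image_of_injective _ (fun b b' h => (Prod.ext_iff.mp h).2),
    Set.ncard_univ, Nat.card_eq_fintype_card, Fintype.card_fin]

lemma ncard_box (a : Fin (N+3)) (t : Set (Fin (M+3))) :
    (box a t : Set (Fin (N+3) × Fin (M+3))).ncard = t.ncard := by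
  rw [box_eq_image, Set.ncard_image_of_injective _ (fun b b' h => (Prod.ext_iff.mp h).2)]

lemma disj_col_col {i j : Fin (N+3)} (h : i ≠ j) :
    Disjoint (col i : Set (Fin (N+3) × Fin (M+3))) (col j) := by
  rw [Set.disjoint_left]
  rintro ⟨c, d⟩ hi hj
  exact h (hi.symm.trans hj)

lemma disj_col_box {i a : Fin (N+3)} (h : i ≠ a) (t : Set (Fin (M+3))) :
    Disjoint (col i : Set (Fin (N+3) × Fin (M+3))) (box a t) := by
  rw [Set.disjoint_left]
  rintro ⟨c, d⟩ hi hj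
  exact h (hi.symm.trans hj.1)

/-- Decomposition of closed neighborhoods in a lexicographic product over the cycle. -/
lemma lex_nbhd (H : SimpleGraph (Fin (M+3))) (v : Fin (N+3) × Fin (M+3)) :
    closedNbhd (lexProd (SimpleGraph.cycleGraph (N+3)) H) v =
      col (v.1 - 1) ∪ col (v.1 + 1) ∪ box v.1 (closedNbhd H v.2) := by
  obtain ⟨a, b⟩ := v
  ext ⟨c, d⟩
  simp only [closedNbhd, Set.mem_insert_iff, SimpleGraph.mem_neighborSet, lexProd,
    fin_cycle_adj, Set.mem_union, col, box, Set.mem_setOf_eq, Prod.mk.injEq]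
  constructor
  · rintro (⟨rfl, rfl⟩ | h)
    · exact Or.inr ⟨rfl, Or.inl rfl⟩
    · rcases h with (h | h) | ⟨rfl, h⟩
      · exact Or.inl (Or.inr h)
      · exact Or.inl (Or.inl (by rw [h]; ring))
      · exact Or.inr ⟨rfl, Or.inr h⟩
  · rintro ((h | h) | ⟨rfl, (rfl | h)⟩)
    · exact Or.inr (Or.inl (Or.inr (by rw [h]; ring)))
    · exact Or.inr (Or.inl (Or.inl h))
    · exact Or.inl ⟨rfl, rfl⟩
    · exact Or.inr (Or.inr ⟨rfl, h⟩)

lemma mem_closedNbhd_self {γ : Type*} (G : SimpleGraph γ) (v : γ) : v ∈ closedNbhd G v :=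
  Set.mem_insert _ _

lemma pN_subset (b : Fin (M+3)) :
    closedNbhd (SimpleGraph.pathGraph (M+3)) b ⊆ {b, b + 1, b - 1} := by
  intro x hx
  rcases hx with rfl | hx
  · exact Set.mem_insert _ _
  · rw [SimpleGraph.mem_neighborSet, fin_path_adj] at hx
    rcases hx with ⟨rfl, -⟩ | ⟨h, -⟩
    · exact Set.mem_insert_of_mem _ (Set.mem_insert _ _)
    · refine Set.mem_insert_of_mem _ (Set.mem_insert_of_mem _ ?_)
      rw [Set.mem_singleton_iff, eq_sub_iff_add_eq, ← h]

lemma pN_ncard_le (b : Fin (M+3)) :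
    (closedNbhd (SimpleGraph.pathGraph (M+3)) b).ncard ≤ 3 := by
  refine le_trans (Set.ncard_le_ncard (pN_subset b) (Set.toFinite _)) ?_
  refine le_trans (Set.ncard_insert_le _ _) ?_
  have := Set.ncard_insert_le (b+1) ({b-1} : Set (Fin (M+3)))
  simp only [Set.ncard_singleton] at this
  omega

lemma pN_ncard_ge (b : Fin (M+3)) :
    2 ≤ (closedNbhd (SimpleGraph.pathGraph (M+3)) b).ncard := by
  by_cases hb : b = Fin.last (M+2)
  · have hmem : b - 1 ∈ closedNbhd (SimpleGraph.pathGraph (M+3)) b := by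
      refine Set.mem_insert_of_mem _ ?_
      rw [SimpleGraph.mem_neighborSet, fin_path_adj]
      refine Or.inr ⟨by ring, fun h => fin_sub_one_ne_self b (h.trans hb.symm)⟩
    have hsub : ({b, b - 1} : Set (Fin (M+3))) ⊆ closedNbhd (SimpleGraph.pathGraph (M+3)) b := by
      rintro x (rfl | hx)
      · exact mem_closedNbhd_self _ _
      · rw [Set.mem_singleton_iff] at hx
        exact hx ▸ hmem
    calc 2 = ({b, b - 1} : Set (Fin (M+3))).ncard :=
          (Set.ncard_pair (Ne.symm (fin_sub_one_ne_self b))).symm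
      _ ≤ _ := Set.ncard_le_ncard hsub (Set.toFinite _)
  · have hmem : b + 1 ∈ closedNbhd (SimpleGraph.pathGraph (M+3)) b := by
      refine Set.mem_insert_of_mem _ ?_
      rw [SimpleGraph.mem_neighborSet, fin_path_adj]
      exact Or.inl ⟨rfl, hb⟩
    have hsub : ({b, b + 1} : Set (Fin (M+3))) ⊆ closedNbhd (SimpleGraph.pathGraph (M+3)) b := by
      rintro x (rfl | hx)
      · exact mem_closedNbhd_self _ _
      · rw [Set.mem_singleton_iff] at hx
        exact hx ▸ hmem
    calc 2 = ({b, b + 1} : Set (Fin (M+3))).ncard :=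
          (Set.ncard_pair (Ne.symm (fin_add_one_ne_self b))).symm
      _ ≤ _ := Set.ncard_le_ncard hsub (Set.toFinite _)

lemma cN_eq (b : Fin (M+3)) :
    closedNbhd (SimpleGraph.cycleGraph (M+3)) b = {b, b + 1, b - 1} := by
  ext x
  simp only [closedNbhd, Set.mem_insert_iff, SimpleGraph.mem_neighborSet, fin_cycle_adj,
    Set.mem_singleton_iff]
  constructor
  · rintro (rfl | rfl | h)
    · exact Or.inl rfl
    · exact Or.inr (Or.inl rfl)
    · exact Or.inr (Or.inr (by rw [eq_sub_iff_add_eq, ← h]))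
  · rintro (rfl | rfl | rfl)
    · exact Or.inl rfl
    · exact Or.inr (Or.inl rfl)
    · exact Or.inr (Or.inr (by ring))

lemma cN_ncard (b : Fin (M+3)) :
    (closedNbhd (SimpleGraph.cycleGraph (M+3)) b).ncard = 3 := by
  rw [cN_eq]
  rw [Set.ncard_insert_of_notMem (by
    rintro (h | h)
    · exact fin_add_one_ne_self b h.symm
    · rw [Set.mem_singleton_iff] at h
      exact fin_sub_one_ne_self b h.symm) (Set.toFinite _)]
  rw [Set.ncard_pair (fun h => fin_sub_one_ne_add_one b h.symm)]

lemma pN_subset_cN (b : Fin (M+3)) :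
    closedNbhd (SimpleGraph.pathGraph (M+3)) b ⊆ closedNbhd (SimpleGraph.cycleGraph (M+3)) b := by
  rintro x (rfl | hx)
  · exact mem_closedNbhd_self _ _
  · exact Set.mem_insert_of_mem _ (fin_path_adj_of_cycle_adj hx)

end Cols

section Split

variable {N M : ℕ}

lemma tri_split {i j a : Fin (N+3)} (t : Set (Fin (M+3)))
    (hij : i ≠ j) (hia : i ≠ a) (hja : j ≠ a) (W : Set (Fin (N+3) × Fin (M+3))) :
    ((col i ∪ col j ∪ box a t) ∩ W).ncard =
      (col i ∩ W).ncard + (col j ∩ W).ncard + (box a t ∩ W).ncard := by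
  rw [Set.union_inter_distrib_right, Set.union_inter_distrib_right]
  rw [Set.ncard_union_eq (by
        refine Set.disjoint_union_left.mpr ⟨?_, ?_⟩
        · exact ((disj_col_box hia t).mono Set.inter_subset_left Set.inter_subset_left)
        · exact ((disj_col_box hja t).mono Set.inter_subset_left Set.inter_subset_left))
      (Set.toFinite _) (Set.toFinite _)]
  rw [Set.ncard_union_eq ((disj_col_col hij).mono Set.inter_subset_left Set.inter_subset_left)
      (Set.toFinite _) (Set.toFinite _)]

lemma tri_ncard {i j a : Fin (N+3)} (t : Set (Fin (M+3)))
    (hij : i ≠ j) (hia : i ≠ a) (hja : j ≠ a) :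
    (col i ∪ col j ∪ box a t).ncard = (M+3) + (M+3) + t.ncard := by
  have := tri_split t hij hia hja Set.univ
  simp only [Set.inter_univ] at this
  rw [this, ncard_col, ncard_col, ncard_box]

lemma nbhd_dist1 (a : Fin (N+3)) : a - 1 ≠ a + 1 := fin_sub_one_ne_add_one a
lemma nbhd_dist2 (a : Fin (N+3)) : a - 1 ≠ a := fin_sub_one_ne_self a
lemma nbhd_dist3 (a : Fin (N+3)) : a + 1 ≠ a := fin_add_one_ne_self a

lemma ncard_nbhd_CC (v : Fin (N+3) × Fin (M+3)) :
    (closedNbhd (lexProd (SimpleGraph.cycleGraph (N+3)) (SimpleGraph.cycleGraph (M+3))) v).ncard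
      = 2 * (M+3) + 3 := by
  rw [lex_nbhd, tri_ncard _ (nbhd_dist1 v.1) (nbhd_dist2 v.1) (nbhd_dist3 v.1), cN_ncard]
  ring

/-- Any GDA of `Cₙ ∘ Cₘ` is a GDA of `Cₙ ∘ Pₘ`. -/
theorem transfer_CC_CP (S : Set (Fin (N+3) × Fin (M+3)))
    (h : IsGDA (lexProd (SimpleGraph.cycleGraph (N+3)) (SimpleGraph.cycleGraph (M+3))) S) :
    IsGDA (lexProd (SimpleGraph.cycleGraph (N+3)) (SimpleGraph.pathGraph (M+3))) S := by
  obtain ⟨hdef, hdom⟩ := h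
  set CC := lexProd (SimpleGraph.cycleGraph (N+3)) (SimpleGraph.cycleGraph (M+3)) with hCC
  set CP := lexProd (SimpleGraph.cycleGraph (N+3)) (SimpleGraph.pathGraph (M+3)) with hCP
  constructor
  · -- defensive alliance
    intro v hv
    have hall := hdef v hv
    set A := closedNbhd CC v with hA
    set B := closedNbhd CP v with hB
    have hAeq : A = col (v.1 - 1) ∪ col (v.1 + 1) ∪ box v.1
        (closedNbhd (SimpleGraph.cycleGraph (M+3)) v.2) := lex_nbhd _ v
    have hBeq : B = col (v.1 - 1) ∪ col (v.1 + 1) ∪ box v.1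
        (closedNbhd (SimpleGraph.pathGraph (M+3)) v.2) := lex_nbhd _ v
    have hBsubA : B ⊆ A := by
      rw [hAeq, hBeq]
      refine Set.union_subset_union_right _ ?_
      rintro ⟨c, d⟩ ⟨rfl, hd⟩
      exact ⟨rfl, pN_subset_cN _ hd⟩
    have hAB1 : (A \ B).ncard ≤ 1 := by
      have hsub : A \ B ⊆ box v.1 ((closedNbhd (SimpleGraph.cycleGraph (M+3)) v.2) \
          (closedNbhd (SimpleGraph.pathGraph (M+3)) v.2)) := by
        rintro ⟨c, d⟩ ⟨hcA, hcB⟩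
        rw [hAeq] at hcA
        rcases hcA with (hc | hc) | ⟨rfl, hd⟩
        · exact absurd (by rw [hBeq]; exact Or.inl (Or.inl hc)) hcB
        · exact absurd (by rw [hBeq]; exact Or.inl (Or.inr hc)) hcB
        · refine ⟨rfl, hd, fun hpd => ?_⟩
          exact hcB (by rw [hBeq]; exact Or.inr ⟨rfl, hpd⟩)
      refine le_trans (Set.ncard_le_ncard hsub (Set.toFinite _)) ?_
      rw [ncard_box, Set.ncard_diff (pN_subset_cN v.2) (Set.toFinite _), cN_ncard]
      have := pN_ncard_ge v.2
      omega
    have hcardA : A.ncard = 2 * (M+3) + 3 := ncard_nbhd_CC v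
    have hsumA : (A ∩ S).ncard + (A \ S).ncard = A.ncard :=
      Set.ncard_inter_add_ncard_diff_eq_ncard A S (Set.toFinite _)
    have hbD : (B \ S).ncard ≤ (A \ S).ncard :=
      Set.ncard_le_ncard (Set.diff_subset_diff_left hBsubA) (Set.toFinite _)
    have haS : (A ∩ S).ncard ≤ (B ∩ S).ncard + (A \ B).ncard := by
      refine le_trans (Set.ncard_le_ncard (fun x hx => ?_) (Set.toFinite _))
        (Set.ncard_union_le _ _)
      obtain ⟨hxA, hxS⟩ := hx
      by_cases hxB : x ∈ B
      · exact Or.inl ⟨hxB, hxS⟩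
      · exact Or.inr ⟨hxA, hxB⟩
    omega
  · -- domination
    intro v
    by_contra hno
    push_neg at hno
    obtain ⟨hv1, hv2⟩ := hno
    rcases hdom v with h | ⟨u, huS, huAdj⟩
    · exact hv1 h
    rcases huAdj with hc | ⟨heq, -⟩
    · exact hv2 u huS (Or.inl hc)
    · -- v.1 = u.1 : the only CC-neighbour found lies in the same copy
      have hall := hdef u huS
      have hsub : closedNbhd CC u ∩ S ⊆ box u.1 (closedNbhd (SimpleGraph.cycleGraph (M+3)) u.2) := by
        rintro w ⟨hwA, hwS⟩
        rw [lex_nbhd] at hwA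
        rcases hwA with (hw | hw) | hw
        · exact absurd (Or.inl (by
            rw [fin_cycle_adj]
            exact Or.inr (by rw [hw, heq]; ring))) (hv2 w hwS)
        · exact absurd (Or.inl (by
            rw [fin_cycle_adj]
            exact Or.inl (by rw [hw, heq]))) (hv2 w hwS)
        · exact hw
      have h1 : (closedNbhd CC u ∩ S).ncard ≤ 3 := by
        refine le_trans (Set.ncard_le_ncard hsub (Set.toFinite _)) ?_
        rw [ncard_box, cN_ncard]
      have hsumA : (closedNbhd CC u ∩ S).ncard + (closedNbhd CC u \ S).ncard
          = (closedNbhd CC u).ncard :=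
        Set.ncard_inter_add_ncard_diff_eq_ncard _ S (Set.toFinite _)
      have hcardA : (closedNbhd CC u).ncard = 2 * (M+3) + 3 := by
        rw [hCC]; exact ncard_nbhd_CC u
      omega

end Split

section Rotation

variable {N M : ℕ}

/-- The rotation of the torus by `k` in the first coordinate. -/
def rotEquiv (k : Fin (N+3)) : (Fin (N+3) × Fin (M+3)) ≃ (Fin (N+3) × Fin (M+3)) :=
  (Equiv.subRight k).prodCongr (Equiv.refl _)

lemma rotEquiv_apply (k : Fin (N+3)) (v : Fin (N+3) × Fin (M+3)) :
    rotEquiv k v = (v.1 - k, v.2) := rfl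

/-- The pairs separated by cutting the cycle between `k-1` and `k`, as seen from `v`. -/
def cutSet (k : Fin (N+3)) (v : Fin (N+3) × Fin (M+3)) : Set (Fin (N+3) × Fin (M+3)) :=
  {z | (v.1 = k - 1 ∧ z.1 = k) ∨ (z.1 = k - 1 ∧ v.1 = k)}

lemma pp_adj_rot (k : Fin (N+3)) (v z : Fin (N+3) × Fin (M+3)) :
    (lexProd (SimpleGraph.pathGraph (N+3)) (SimpleGraph.pathGraph (M+3))).Adj
        (rotEquiv k v) (rotEquiv (M := M) k z) ↔
      ((lexProd (SimpleGraph.cycleGraph (N+3)) (SimpleGraph.pathGraph (M+3))).Adj v z ∧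
        ¬(v.1 = k - 1 ∧ z.1 = k) ∧ ¬(z.1 = k - 1 ∧ v.1 = k)) := by
  show ((SimpleGraph.pathGraph (N+3)).Adj (v.1 - k) (z.1 - k) ∨ (v.1 - k = z.1 - k ∧ _)) ↔ _
  rw [fin_rot_path_adj, sub_left_inj]
  show _ ↔ (((SimpleGraph.cycleGraph (N+3)).Adj v.1 z.1 ∨
      (v.1 = z.1 ∧ (SimpleGraph.pathGraph (M+3)).Adj v.2 z.2)) ∧ _ ∧ _)
  have hne : k - 1 ≠ k := fin_sub_one_ne_self k
  constructor
  · rintro (⟨ha, h1, h2⟩ | ⟨he, hp⟩)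
    · exact ⟨Or.inl ha, h1, h2⟩
    · refine ⟨Or.inr ⟨he, hp⟩, ?_, ?_⟩
      · rintro ⟨ha, hb⟩; exact hne (ha.symm.trans (he.trans hb))
      · rintro ⟨ha, hb⟩; exact hne (ha.symm.trans (he.symm.trans hb))
  · rintro ⟨ha | ⟨he, hp⟩, h1, h2⟩
    · exact Or.inl ⟨ha, h1, h2⟩
    · exact Or.inr ⟨he, hp⟩

lemma pp_nbhd_rot (k : Fin (N+3)) (v : Fin (N+3) × Fin (M+3)) :
    closedNbhd (lexProd (SimpleGraph.pathGraph (N+3)) (SimpleGraph.pathGraph (M+3)))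
        (rotEquiv (M := M) k v) =
      (rotEquiv k) ''
        ((closedNbhd (lexProd (SimpleGraph.cycleGraph (N+3)) (SimpleGraph.pathGraph (M+3))) v)
          \ cutSet k v) := by
  have hne : k - 1 ≠ k := fin_sub_one_ne_self k
  have hvc : v ∉ cutSet k v := by
    rintro (⟨h1, h2⟩ | ⟨h1, h2⟩)
    · exact hne (h1.symm.trans h2)
    · exact hne (h1.symm.trans h2)
  ext w
  rcases (rotEquiv (N := N) (M := M) k).surjective w with ⟨z, rfl⟩
  simp only [closedNbhd, Set.mem_insert_iff, SimpleGraph.mem_neighborSet]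
  constructor
  · rintro (hw | hw)
    · obtain rfl : z = v := (rotEquiv k).injective hw
      exact ⟨z, ⟨Or.inl rfl, hvc⟩, rfl⟩
    · rw [pp_adj_rot] at hw
      obtain ⟨ha, h1, h2⟩ := hw
      exact ⟨z, ⟨Or.inr ha, fun hc => hc.elim (fun hc => h1 hc) (fun hc => h2 hc)⟩, rfl⟩
  · rintro ⟨y, ⟨hy1, hy2⟩, hy3⟩
    obtain rfl : y = z := (rotEquiv k).injective hy3
    rcases hy1 with rfl | hy1
    · exact Or.inl rfl
    · refine Or.inr ?_
      rw [pp_adj_rot]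
      exact ⟨hy1, fun hc => hy2 (Or.inl hc), fun hc => hy2 (Or.inr hc)⟩

lemma union3_diff {γ : Type*} {P Q R : Set γ} (hP : Disjoint P Q) (hR : Disjoint R Q) :
    (P ∪ Q ∪ R) \ Q = P ∪ R := by
  ext x
  constructor
  · rintro ⟨(hx | hx) | hx, hxQ⟩
    · exact Or.inl hx
    · exact absurd hx hxQ
    · exact Or.inr hx
  · rintro (hx | hx)
    · exact ⟨Or.inl (Or.inl hx), Set.disjoint_left.mp hP hx⟩
    · exact ⟨Or.inr hx, Set.disjoint_left.mp hR hx⟩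

lemma duo_split {i a : Fin (N+3)} (t : Set (Fin (M+3))) (hia : i ≠ a)
    (W : Set (Fin (N+3) × Fin (M+3))) :
    ((col i ∪ box a t) ∩ W).ncard = (col i ∩ W).ncard + (box a t ∩ W).ncard := by
  rw [Set.union_inter_distrib_right]
  rw [Set.ncard_union_eq ((disj_col_box hia t).mono Set.inter_subset_left Set.inter_subset_left)
    (Set.toFinite _) (Set.toFinite _)]

end Rotation

section Transfer1

variable {N M : ℕ}

lemma union3_diff' {γ : Type*} {P Q R : Set γ} (hP : Disjoint P Q) (hR : Disjoint R Q) :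
    (Q ∪ P ∪ R) \ Q = P ∪ R := by
  have : Q ∪ P ∪ R = P ∪ Q ∪ R := by rw [Set.union_comm Q P]
  rw [this]
  exact union3_diff hP hR

theorem transfer_CP_PP (S : Set (Fin (N+3) × Fin (M+3)))
    (h : IsGDA (lexProd (SimpleGraph.cycleGraph (N+3)) (SimpleGraph.pathGraph (M+3))) S) :
    ∃ T : Set (Fin (N+3) × Fin (M+3)),
      IsGDA (lexProd (SimpleGraph.pathGraph (N+3)) (SimpleGraph.pathGraph (M+3))) T ∧
        T.ncard = S.ncard := by
  obtain ⟨hdef, hdom⟩ := h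
  set c : Fin (N+3) → ℕ := fun j => (col j ∩ S).ncard with hc
  obtain ⟨j₀, -, hmin⟩ := Finset.exists_min_image Finset.univ (fun j => c j + c (j + 1))
    ⟨0, Finset.mem_univ 0⟩
  set k : Fin (N+3) := j₀ + 1 with hk
  have hkj : k - 1 = j₀ := by rw [hk]; ring
  have hjk : j₀ ≠ k := fun h => fin_add_one_ne_self j₀ (by rw [← hk]; exact h.symm)
  have hkj2 : k ≠ j₀ := fun h => hjk h.symm
  have hk1j : k + 1 ≠ j₀ := fun h => fin_sub_one_ne_add_one k (hkj.trans h.symm)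
  have hd_ik : j₀ - 1 ≠ k := by rw [hk]; exact nbhd_dist1 j₀
  have hmin1 : c k ≤ c (j₀ - 1) := by
    have h1 := hmin (j₀ - 1) (Finset.mem_univ _)
    rw [sub_add_cancel] at h1
    omega
  have hmin2 : c j₀ ≤ c (k + 1) := by
    have h1 := hmin k (Finset.mem_univ _)
    omega
  refine ⟨rotEquiv k '' S, ⟨?_, ?_⟩, Set.ncard_image_of_injective _ (rotEquiv k).injective⟩
  · -- defensive alliance
    intro w hw
    obtain ⟨v, hvS, rfl⟩ := hw
    rw [pp_nbhd_rot, ← Set.image_diff (rotEquiv k).injective,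
      ← Set.image_inter (rotEquiv k).injective,
      Set.ncard_image_of_injective _ (rotEquiv k).injective,
      Set.ncard_image_of_injective _ (rotEquiv k).injective]
    have hall := hdef v hvS
    rw [lex_nbhd] at hall
    simp only [hc] at hmin1 hmin2
    have eP1 : 2 ≤ (closedNbhd (SimpleGraph.pathGraph (M+3)) v.2).ncard := pN_ncard_ge v.2
    have eP2 : (closedNbhd (SimpleGraph.pathGraph (M+3)) v.2).ncard ≤ 3 := pN_ncard_le v.2
    have ebox : ∀ a : Fin (N+3),
        (box a (closedNbhd (SimpleGraph.pathGraph (M+3)) v.2) ∩ S).ncard +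
          (box a (closedNbhd (SimpleGraph.pathGraph (M+3)) v.2) \ S).ncard =
          (closedNbhd (SimpleGraph.pathGraph (M+3)) v.2).ncard := by
      intro a
      rw [Set.ncard_inter_add_ncard_diff_eq_ncard _ _ (Set.toFinite _), ncard_box]
    have ecol : ∀ j : Fin (N+3), ((col j : Set (Fin (N+3) × Fin (M+3))) ∩ S).ncard +
        (col j \ S).ncard = M + 3 := by
      intro j
      rw [Set.ncard_inter_add_ncard_diff_eq_ncard _ _ (Set.toFinite _), ncard_col]
    have hd1 : j₀ - 1 ≠ j₀ := nbhd_dist2 j₀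
    by_cases hvj : v.1 = j₀
    · -- the cut removes column k from the neighbourhood
      have hcut : cutSet k v = col k := by
        ext z
        constructor
        · rintro (⟨-, h2⟩ | ⟨-, h2⟩)
          · exact h2
          · exact absurd (hvj.symm.trans h2) hjk
        · intro hz
          exact Or.inl ⟨hvj.trans hkj.symm, hz⟩
      have hXeq : closedNbhd
            (lexProd (SimpleGraph.cycleGraph (N+3)) (SimpleGraph.pathGraph (M+3))) v
            \ cutSet k v =
          col (j₀ - 1) ∪ box j₀ (closedNbhd (SimpleGraph.pathGraph (M+3)) v.2) := by
        rw [lex_nbhd, hcut, hvj, ← hk]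
        exact union3_diff (disj_col_col hd_ik) ((disj_col_box hkj2 _).symm)
      rw [hXeq, Set.diff_eq, duo_split _ hd1, duo_split _ hd1, ← Set.diff_eq, ← Set.diff_eq]
      rw [hvj, ← hk, Set.diff_eq, tri_split _ hd_ik hd1 hkj2, tri_split _ hd_ik hd1 hkj2,
        ← Set.diff_eq, ← Set.diff_eq, ← Set.diff_eq] at hall
      have hs : 1 ≤ (box j₀ (closedNbhd (SimpleGraph.pathGraph (M+3)) v.2) ∩ S).ncard :=
        (Set.ncard_pos (Set.toFinite _)).mpr ⟨v, ⟨hvj, mem_closedNbhd_self _ _⟩, hvS⟩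
      have h1 := ecol (j₀ - 1)
      have h2 := ecol k
      have h3 := ebox j₀
      omega
    by_cases hvk : v.1 = k
    · -- the cut removes column j₀ from the neighbourhood
      have hcut : cutSet k v = col j₀ := by
        ext z
        constructor
        · rintro (⟨h1, -⟩ | ⟨h1, -⟩)
          · exact absurd (hvk.symm.trans h1) (fun hh => fin_sub_one_ne_self k hh.symm)
          · exact h1.trans hkj
        · intro hz
          exact Or.inr ⟨hz.trans hkj.symm, hvk⟩
      have hXeq : closedNbhd
            (lexProd (SimpleGraph.cycleGraph (N+3)) (SimpleGraph.pathGraph (M+3))) v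
            \ cutSet k v =
          col (k + 1) ∪ box k (closedNbhd (SimpleGraph.pathGraph (M+3)) v.2) := by
        rw [lex_nbhd, hcut, hvk, hkj]
        exact union3_diff' (disj_col_col hk1j) ((disj_col_box hjk _).symm)
      have hd2 : k + 1 ≠ k := nbhd_dist3 k
      rw [hXeq, Set.diff_eq, duo_split _ hd2, duo_split _ hd2, ← Set.diff_eq, ← Set.diff_eq]
      rw [hvk, hkj, Set.diff_eq, tri_split _ (fun h => hk1j h.symm) hjk hd2,
        tri_split _ (fun h => hk1j h.symm) hjk hd2,
        ← Set.diff_eq, ← Set.diff_eq, ← Set.diff_eq] at hall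
      have hs : 1 ≤ (box k (closedNbhd (SimpleGraph.pathGraph (M+3)) v.2) ∩ S).ncard :=
        (Set.ncard_pos (Set.toFinite _)).mpr ⟨v, ⟨hvk, mem_closedNbhd_self _ _⟩, hvS⟩
      have h1 := ecol j₀
      have h2 := ecol (k + 1)
      have h3 := ebox k
      omega
    · -- no cut edge at v's column
      have hcut : cutSet k v = ∅ := by
        ext z
        constructor
        · rintro (⟨h1, -⟩ | ⟨-, h2⟩)
          · exact hvj (h1.trans hkj)
          · exact hvk h2
        · intro hz
          exact absurd hz (Set.notMem_empty z)
      rw [hcut, Set.diff_empty, lex_nbhd]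
      exact hall
  · -- domination
    intro w
    obtain ⟨v, rfl⟩ := (rotEquiv (N := N) (M := M) k).surjective w
    by_cases hvS : v ∈ S
    · exact Or.inl ⟨v, hvS, rfl⟩
    rcases hdom v with hv | ⟨u, huS, huAdj⟩
    · exact absurd hv hvS
    by_cases hc1 : v.1 = j₀ ∧ u.1 = k
    · have hck : 0 < c k := by
        rw [hc]
        exact (Set.ncard_pos (Set.toFinite _)).mpr ⟨u, hc1.2, huS⟩
      have hx : 0 < c (j₀ - 1) := lt_of_lt_of_le hck hmin1
      have hx' : (col (j₀ - 1) ∩ S).Nonempty := by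
        rw [hc] at hx
        exact (Set.ncard_pos (Set.toFinite _)).mp hx
      obtain ⟨z, hz1, hzS⟩ := hx'
      refine Or.inr ⟨rotEquiv k z, Set.mem_image_of_mem _ hzS, ?_⟩
      rw [pp_adj_rot]
      refine ⟨Or.inl ?_, ?_, ?_⟩
      · rw [fin_cycle_adj]
        right
        rw [hc1.1, hz1]
        ring
      · rintro ⟨-, hzk⟩
        exact hd_ik (hz1.symm.trans hzk)
      · rintro ⟨hzz, -⟩
        exact nbhd_dist2 j₀ (hz1.symm.trans (hzz.trans hkj))
    by_cases hc2 : v.1 = k ∧ u.1 = j₀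
    · have hcj : 0 < c j₀ := by
        rw [hc]
        exact (Set.ncard_pos (Set.toFinite _)).mpr ⟨u, hc2.2, huS⟩
      have hx : 0 < c (k + 1) := lt_of_lt_of_le hcj hmin2
      have hx' : (col (k + 1) ∩ S).Nonempty := by
        rw [hc] at hx
        exact (Set.ncard_pos (Set.toFinite _)).mp hx
      obtain ⟨z, hz1, hzS⟩ := hx'
      refine Or.inr ⟨rotEquiv k z, Set.mem_image_of_mem _ hzS, ?_⟩
      rw [pp_adj_rot]
      refine ⟨Or.inl ?_, ?_, ?_⟩
      · rw [fin_cycle_adj]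
        left
        rw [hc2.1, hz1]
      · rintro ⟨hvv, -⟩
        exact (fin_sub_one_ne_self k).symm (hc2.1.symm.trans hvv)
      · rintro ⟨hzz, -⟩
        exact hk1j (hz1.symm.trans (hzz.trans hkj))
    · refine Or.inr ⟨rotEquiv k u, Set.mem_image_of_mem _ huS, ?_⟩
      rw [pp_adj_rot]
      refine ⟨huAdj, ?_, ?_⟩
      · rintro ⟨h1, h2⟩
        exact hc1 ⟨h1.trans hkj, h2⟩
      · rintro ⟨h1, h2⟩
        exact hc2 ⟨h2, h1.trans hkj⟩

end Transfer1

theorem stmt_11 (n m : ℕ) (hn : 3 ≤ n) (hm : 3 ≤ m) :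
    gdaNumber (lexProd (SimpleGraph.pathGraph n) (SimpleGraph.pathGraph m)) ≤
      gdaNumber (lexProd (SimpleGraph.cycleGraph n) (SimpleGraph.pathGraph m)) ∧
    gdaNumber (lexProd (SimpleGraph.cycleGraph n) (SimpleGraph.pathGraph m)) ≤
      gdaNumber (lexProd (SimpleGraph.cycleGraph n) (SimpleGraph.cycleGraph m)) := by
  obtain ⟨N, rfl⟩ : ∃ N, n = N + 3 := ⟨n - 3, by omega⟩
  obtain ⟨M, rfl⟩ : ∃ M, m = M + 3 := ⟨m - 3, by omega⟩
  constructor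
  · exact gdaNumber_le_of_transfer _ _ (fun S hS => transfer_CP_PP S hS)
  · exact gdaNumber_le_of_transfer _ _ (fun S hS => ⟨S, transfer_CC_CP S hS, rfl⟩)
end FinLemmas
end

section
/- Let G¹ ∈ {Pₙ, Cₙ} with n divisible by 4, G² ∈ {Pₘ, Cₘ} with m ≥ 3, and let S be a global defensive alliance of G¹ ∘ G² such that sᵢ ≥ 1 for every 2 ≤ i ≤ n−1, where sᵢ is the number of vertices of S in the i-th copy of G². Then |S| ≥ (2m − 1)·n/4. -/
open SimpleGraph Set

lemma fin_val_add_one {k : ℕ} (b : Fin (k + 2)) :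
    ((b + 1 : Fin (k + 2)) : ℕ) = if b = Fin.last (k + 1) then 0 else (b : ℕ) + 1 :=
  Fin.val_add_one b

lemma fin_val_sub_one {k : ℕ} (b : Fin (k + 2)) :
    ((b - 1 : Fin (k + 2)) : ℕ) = if b = 0 then k + 1 else (b : ℕ) - 1 :=
  Fin.coe_sub_one b

lemma fin_succ_eq {k : ℕ} {a b : Fin (k + 2)} (h : (b : ℕ) + 1 = (a : ℕ)) : a = b + 1 := by
  apply Fin.ext
  rw [fin_val_add_one]
  split
  · next hl =>
      exfalso
      have hb : (b : ℕ) = k + 1 := by rw [hl]; simp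
      have := a.isLt; omega
  · omega

lemma fin_succ_val {k : ℕ} {a b : Fin (k + 2)} (hb : (b : ℕ) ≤ k) (h : a = b + 1) :
    (a : ℕ) = (b : ℕ) + 1 := by
  subst h
  rw [fin_val_add_one]
  split
  · next hl =>
      exfalso
      have hb' : (b : ℕ) = k + 1 := by rw [hl]; simp
      omega
  · rfl

lemma aux_cross {m : ℕ} {G : SimpleGraph (Fin m)} (hconn : G.Preconnected)
    {T : Set (Fin m)} {x0 y0 : Fin m} (hx0 : x0 ∈ T) (hy0 : y0 ∉ T) :
    ∃ x ∈ T, ∃ y, G.Adj x y ∧ y ∉ T := by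
  obtain ⟨w⟩ := hconn x0 y0
  obtain ⟨d, _, h1, h2⟩ := w.exists_boundary_dart T hx0 hy0
  exact ⟨d.toProd.1, h1, d.toProd.2, d.adj, h2⟩

lemma aux_preconn {m : ℕ} {G : SimpleGraph (Fin m)}
    (hG : G = pathGraph m ∨ G = cycleGraph m) : G.Preconnected := by
  rcases hG with rfl | rfl
  · exact pathGraph_preconnected m
  · exact cycleGraph_preconnected

lemma aux_deg {m : ℕ} (hm : 3 ≤ m) {G : SimpleGraph (Fin m)}
    (hG : G = pathGraph m ∨ G = cycleGraph m) (x : Fin m) :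
    (G.neighborSet x).ncard ≤ 2 := by
  obtain ⟨k, rfl⟩ : ∃ k, m = k + 2 := ⟨m - 2, by omega⟩
  have hsub : G.neighborSet x ⊆ {x - 1, x + 1} := by
    rcases hG with rfl | rfl
    · intro y hy
      rw [mem_neighborSet, pathGraph_adj] at hy
      simp only [Set.mem_insert_iff, Set.mem_singleton_iff]
      rcases hy with h | h
      · right
        apply Fin.ext
        rw [fin_val_add_one]
        split
        · next hlast =>
            exfalso
            have hx : (x : ℕ) = k + 1 := by rw [hlast]; simp
            have := y.isLt; omega
        · omega
      · left
        apply Fin.ext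
        rw [fin_val_sub_one]
        split
        · next h0 =>
            exfalso
            have hx : (x : ℕ) = 0 := by rw [h0]; simp
            omega
        · omega
    · exact (cycleGraph_neighborSet (n := k) (v := x)).subset
  refine (Set.ncard_le_ncard hsub (Set.toFinite _)).trans ?_
  refine (Set.ncard_insert_le _ _).trans ?_
  simp

lemma aux_adjG1 {n : ℕ} (hn : 4 ≤ n) {G : SimpleGraph (Fin n)}
    (hG : G = pathGraph n ∨ G = cycleGraph n) {a : Fin n} (ha1 : 1 ≤ (a : ℕ))
    (ha2 : (a : ℕ) ≤ n - 2) (b : Fin n) :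
    G.Adj a b ↔ ((b : ℕ) + 1 = (a : ℕ) ∨ (b : ℕ) = (a : ℕ) + 1) := by
  obtain ⟨k, rfl⟩ : ∃ k, n = k + 2 := ⟨n - 2, by omega⟩
  have ha2' : (a : ℕ) ≤ k := by omega
  rcases hG with rfl | rfl
  · rw [pathGraph_adj]; omega
  · rw [cycleGraph_adj]
    constructor
    · rintro (h | h)
      · left
        have hab : a = b + 1 := by rw [← sub_eq_iff_eq_add']; exact h
        have hbk : (b : ℕ) ≤ k := by
          by_contra hc
          have hb1 : b = Fin.last (k + 1) := by
            apply Fin.ext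
            have := b.isLt; simp; omega
          have : (a : ℕ) = 0 := by rw [hab, fin_val_add_one, if_pos hb1]
          omega
        rw [fin_succ_val hbk hab]
      · right
        have hab : b = a + 1 := by rw [← sub_eq_iff_eq_add']; exact h
        rw [fin_succ_val ha2' hab]
    · rintro (h | h)
      · left
        rw [sub_eq_iff_eq_add']
        exact fin_succ_eq h
      · right
        rw [sub_eq_iff_eq_add']
        exact fin_succ_eq h.symm

section Main


variable {n m : ℕ}

lemma defense_key (hn : 4 ≤ n) (hm : 3 ≤ m)
    {G1 : SimpleGraph (Fin n)}
    (hG1 : G1 = SimpleGraph.pathGraph n ∨ G1 = SimpleGraph.cycleGraph n)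
    {G2 : SimpleGraph (Fin m)}
    {S : Set (Fin n × Fin m)} (hS : IsDefensiveAlliance (lexProd G1 G2) S)
    {a : Fin n} (ha1 : 1 ≤ (a : ℕ)) (ha2 : (a : ℕ) ≤ n - 2) {x : Fin m}
    (hx : (a, x) ∈ S) {t : ℕ}
    (ht : ({y | (a, y) ∈ S} ∩ closedNbhd G2 x).ncard ≤ t) :
    2 * m + (G2.neighborSet x).ncard + 1
      ≤ 2 * (copyCount S (a : ℕ) + copyCount S ((a : ℕ) + 2) + t) := by
  classical
  set d := (G2.neighborSet x).ncard with hd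
  set A := closedNbhd (lexProd G1 G2) (a, x) with hA
  set F1 : Set (Fin n × Fin m) := {p | (p.1 : ℕ) + 1 = (a : ℕ)} with hF1
  set F2 : Set (Fin n × Fin m) := {p | (p.1 : ℕ) = (a : ℕ) + 1} with hF2
  set F0 : Set (Fin n × Fin m) := (fun y => (a, y)) '' (closedNbhd G2 x) with hF0
  have hinj : Function.Injective (fun y : Fin m => (a, y)) := by
    intro u v huv; simpa using huv
  have hmem : ∀ p : Fin n × Fin m,
      p ∈ A ↔ (p = (a, x) ∨ G1.Adj a p.1 ∨ (a = p.1 ∧ G2.Adj x p.2)) := fun p => Iff.rfl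
  have hAeq : A = F1 ∪ F2 ∪ F0 := by
    ext p
    rw [hmem p]
    constructor
    · rintro (rfl | h | ⟨heq, hadj⟩)
      · exact Or.inr ⟨x, Or.inl rfl, rfl⟩
      · rw [aux_adjG1 hn hG1 ha1 ha2 p.1] at h
        rcases h with h | h
        · exact Or.inl (Or.inl h)
        · exact Or.inl (Or.inr h)
      · refine Or.inr ⟨p.2, Or.inr hadj, ?_⟩
        rw [heq]
    · rintro ((h | h) | ⟨y', hy', hpe⟩)
      · right; left
        rw [aux_adjG1 hn hG1 ha1 ha2 p.1]
        exact Or.inl h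
      · right; left
        rw [aux_adjG1 hn hG1 ha1 ha2 p.1]
        exact Or.inr h
      · rcases hy' with rfl | hadj
        · exact Or.inl hpe.symm
        · subst hpe
          exact Or.inr (Or.inr ⟨rfl, hadj⟩)
  have hcard1 : F1.ncard = m := by
    set c : Fin n := ⟨(a : ℕ) - 1, by omega⟩ with hc
    have hcv : (c : ℕ) = (a : ℕ) - 1 := rfl
    have hiff : ∀ b : Fin n, (b : ℕ) + 1 = (a : ℕ) ↔ b = c := by
      intro b
      first
      | (rw [Fin.ext_iff]; omega)
      | rw [Fin.ext_iff]
    have himg : F1 = (fun y : Fin m => (c, y)) '' Set.univ := by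
      ext p
      constructor
      · intro h
        exact ⟨p.2, trivial, by rw [show c = p.1 from ((hiff p.1).mp h).symm]⟩
      · rintro ⟨y', -, rfl⟩
        exact (hiff c).mpr rfl
    rw [himg, Set.ncard_image_of_injective _ (by intro u v huv; simpa using huv),
      Set.ncard_univ, Nat.card_eq_fintype_card, Fintype.card_fin]
  have hcard2 : F2.ncard = m := by
    set c : Fin n := ⟨(a : ℕ) + 1, by omega⟩ with hc
    have hcv : (c : ℕ) = (a : ℕ) + 1 := rfl
    have hiff : ∀ b : Fin n, (b : ℕ) = (a : ℕ) + 1 ↔ b = c := by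
      intro b
      first
      | (rw [Fin.ext_iff]; omega)
      | rw [Fin.ext_iff]
    have himg : F2 = (fun y : Fin m => (c, y)) '' Set.univ := by
      ext p
      constructor
      · intro h
        exact ⟨p.2, trivial, by rw [show c = p.1 from ((hiff p.1).mp h).symm]⟩
      · rintro ⟨y', -, rfl⟩
        exact (hiff c).mpr rfl
    rw [himg, Set.ncard_image_of_injective _ (by intro u v huv; simpa using huv),
      Set.ncard_univ, Nat.card_eq_fintype_card, Fintype.card_fin]
  have hcN : (closedNbhd G2 x).ncard = d + 1 := by
    have hxn : x ∉ G2.neighborSet x := fun h => G2.irrefl h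
    rw [closedNbhd, Set.ncard_insert_of_notMem hxn (Set.toFinite _)]
  have hcard0 : F0.ncard = d + 1 := by
    rw [hF0, Set.ncard_image_of_injective _ hinj, hcN]
  have hd12 : Disjoint F1 F2 := by
    rw [Set.disjoint_left]
    intro p h1 h2
    rw [hF1, Set.mem_setOf_eq] at h1
    rw [hF2, Set.mem_setOf_eq] at h2
    omega
  have hd120 : Disjoint (F1 ∪ F2) F0 := by
    rw [Set.disjoint_left]
    rintro p h1 ⟨y', -, rfl⟩
    rcases h1 with h1 | h1
    · rw [hF1, Set.mem_setOf_eq] at h1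
      simp only at h1
      omega
    · rw [hF2, Set.mem_setOf_eq] at h1
      simp only at h1
      omega
  have hcardA : A.ncard = 2 * m + d + 1 := by
    rw [hAeq, Set.ncard_union_eq hd120 (Set.toFinite _) (Set.toFinite _),
      Set.ncard_union_eq hd12 (Set.toFinite _) (Set.toFinite _), hcard1, hcard2, hcard0]
    ring
  have hAS : (A ∩ S).ncard ≤ copyCount S (a : ℕ) + copyCount S ((a : ℕ) + 2) + t := by
    have hsub : A ∩ S ⊆ (F1 ∩ S) ∪ (F2 ∩ S) ∪ (F0 ∩ S) := by
      rw [hAeq]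
      rintro p ⟨(hp1 | hp1) | hp1, hp2⟩
      · exact Or.inl (Or.inl ⟨hp1, hp2⟩)
      · exact Or.inl (Or.inr ⟨hp1, hp2⟩)
      · exact Or.inr ⟨hp1, hp2⟩
    refine (Set.ncard_le_ncard hsub (Set.toFinite _)).trans ?_
    refine (Set.ncard_union_le _ _).trans ?_
    refine add_le_add ((Set.ncard_union_le _ _).trans (add_le_add ?_ ?_)) ?_
    · rw [_root_.copyCount, Set.inter_comm]
    · rw [_root_.copyCount, Set.inter_comm]
      apply le_of_eq
      apply congrArg
      apply congrArg
      ext p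
      simp only [hF2, Set.mem_setOf_eq]
      omega
    · refine le_trans (le_of_eq ?_) ht
      have himg : F0 ∩ S = (fun y => (a, y)) '' ({y | (a, y) ∈ S} ∩ closedNbhd G2 x) := by
        ext p
        constructor
        · rintro ⟨⟨y', hy', rfl⟩, hp⟩
          exact ⟨y', ⟨hp, hy'⟩, rfl⟩
        · rintro ⟨y', ⟨h1, h2⟩, rfl⟩
          exact ⟨⟨y', h2, rfl⟩, h1⟩
      rw [himg, Set.ncard_image_of_injective _ hinj]
  have hdef : (A \ S).ncard ≤ (A ∩ S).ncard := hS (a, x) hx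
  have hsplit : A.ncard = (A ∩ S).ncard + (A \ S).ncard := by
    rw [← Set.ncard_union_eq (Set.disjoint_of_subset_left Set.inter_subset_right
      Set.disjoint_sdiff_right) (Set.toFinite _) (Set.toFinite _), Set.inter_union_diff]
  omega

end Main

lemma closedNbhd_ncard {m : ℕ} (G : SimpleGraph (Fin m)) (x : Fin m) :
    (closedNbhd G x).ncard = (G.neighborSet x).ncard + 1 := by
  have hxn : x ∉ G.neighborSet x := fun h => G.irrefl h
  rw [closedNbhd, Set.ncard_insert_of_notMem hxn (Set.toFinite _)]

section Bounds

variable {n m : ℕ}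

lemma weak_bound (hn : 4 ≤ n) (hm : 3 ≤ m)
    {G1 : SimpleGraph (Fin n)}
    (hG1 : G1 = SimpleGraph.pathGraph n ∨ G1 = SimpleGraph.cycleGraph n)
    {G2 : SimpleGraph (Fin m)}
    (hG2 : G2 = SimpleGraph.pathGraph m ∨ G2 = SimpleGraph.cycleGraph m)
    {S : Set (Fin n × Fin m)} (hS : IsDefensiveAlliance (lexProd G1 G2) S)
    (i : ℕ) (hi1 : 1 ≤ i) (hi2 : i + 1 ≤ n - 1) (hcnt : 1 ≤ copyCount S (i + 1)) :
    m - 1 ≤ copyCount S i + copyCount S (i + 2) := by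
  have hcnt' : (S ∩ {p : Fin n × Fin m | (p.1 : ℕ) + 1 = i + 1}).ncard ≠ 0 := by
    have h := hcnt; unfold _root_.copyCount at h; omega
  obtain ⟨p, hpS, hp1⟩ := Set.nonempty_of_ncard_ne_zero hcnt'
  have hp1 : (p.1 : ℕ) + 1 = i + 1 := hp1
  have hx : (p.1, p.2) ∈ S := by rw [Prod.mk.eta]; exact hpS
  have ha1 : 1 ≤ (p.1 : ℕ) := by omega
  have ha2 : (p.1 : ℕ) ≤ n - 2 := by omega
  have ht : ({y | (p.1, y) ∈ S} ∩ closedNbhd G2 p.2).ncard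
      ≤ (G2.neighborSet p.2).ncard + 1 := by
    refine (Set.ncard_le_ncard Set.inter_subset_right (Set.toFinite _)).trans ?_
    rw [closedNbhd_ncard]
  have hkey := defense_key hn hm hG1 hS ha1 ha2 hx ht
  have hdeg := aux_deg hm hG2 p.2
  have e1 : (p.1 : ℕ) = i := by omega
  rw [e1] at hkey
  omega

lemma strong_bound (hn : 4 ≤ n) (hm : 3 ≤ m)
    {G1 : SimpleGraph (Fin n)}
    (hG1 : G1 = SimpleGraph.pathGraph n ∨ G1 = SimpleGraph.cycleGraph n)
    {G2 : SimpleGraph (Fin m)}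
    (hG2 : G2 = SimpleGraph.pathGraph m ∨ G2 = SimpleGraph.cycleGraph m)
    {S : Set (Fin n × Fin m)} (hS : IsDefensiveAlliance (lexProd G1 G2) S)
    (i : ℕ) (hi1 : 1 ≤ i) (hi2 : i + 1 ≤ n - 1) (hcnt : 1 ≤ copyCount S (i + 1))
    (hlt : copyCount S (i + 1) < m) :
    m ≤ copyCount S i + copyCount S (i + 2) := by
  have hcnt' : (S ∩ {p : Fin n × Fin m | (p.1 : ℕ) + 1 = i + 1}).ncard ≠ 0 := by
    have h := hcnt; unfold _root_.copyCount at h; omega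
  obtain ⟨p, hpS, hp1⟩ := Set.nonempty_of_ncard_ne_zero hcnt'
  have hp1 : (p.1 : ℕ) + 1 = i + 1 := hp1
  have ha1 : 1 ≤ (p.1 : ℕ) := by omega
  have ha2 : (p.1 : ℕ) ≤ n - 2 := by omega
  set a := p.1 with haa
  set T : Set (Fin m) := {y | (a, y) ∈ S} with hT
  have hinj : Function.Injective (fun y : Fin m => (a, y)) := by
    intro u v huv; simpa using huv
  have hTcard : T.ncard = copyCount S (i + 1) := by
    have hset : {q : Fin n × Fin m | (q.1 : ℕ) + 1 = i + 1} = {q | q.1 = a} := by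
      ext q
      simp only [Set.mem_setOf_eq, Fin.ext_iff]
      omega
    have himg : S ∩ {q : Fin n × Fin m | q.1 = a} = (fun y => (a, y)) '' T := by
      ext q
      constructor
      · rintro ⟨hqS, hq1⟩
        refine ⟨q.2, ?_, ?_⟩
        · show (a, q.2) ∈ S
          rw [← hq1, Prod.mk.eta]
          exact hqS
        · show (a, q.2) = q
          rw [← hq1, Prod.mk.eta]
      · rintro ⟨y, hy, rfl⟩
        exact ⟨hy, rfl⟩
    rw [_root_.copyCount, hset, himg, Set.ncard_image_of_injective _ hinj]
  have hx0 : p.2 ∈ T := by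
    show (a, p.2) ∈ S
    rw [haa, Prod.mk.eta]
    exact hpS
  have hy0 : ∃ y0, y0 ∉ T := by
    by_contra hc
    push_neg at hc
    have : T = Set.univ := Set.eq_univ_of_forall hc
    rw [this, Set.ncard_univ, Nat.card_eq_fintype_card, Fintype.card_fin] at hTcard
    omega
  obtain ⟨y0, hy0⟩ := hy0
  obtain ⟨x, hxT, y, hadj, hyT⟩ := aux_cross (aux_preconn hG2) hx0 hy0
  have hyc : y ∈ closedNbhd G2 x := Or.inr hadj
  have ht : (T ∩ closedNbhd G2 x).ncard ≤ (G2.neighborSet x).ncard := by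
    have hsub : T ∩ closedNbhd G2 x ⊆ closedNbhd G2 x \ {y} := by
      rintro z ⟨hzT, hzc⟩
      refine ⟨hzc, ?_⟩
      rintro rfl
      exact hyT hzT
    refine (Set.ncard_le_ncard hsub (Set.toFinite _)).trans ?_
    rw [Set.ncard_diff_singleton_of_mem hyc, closedNbhd_ncard]
    omega
  have hxS : (a, x) ∈ S := hxT
  have hkey := defense_key hn hm hG1 hS ha1 ha2 hxS ht
  have hdeg := aux_deg hm hG2 x
  have e1 : (a : ℕ) = i := by rw [haa]; omega
  rw [e1] at hkey
  omega

end Bounds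

lemma sum_blocks_ge (s : ℕ → ℕ) (M k : ℕ)
    (hb : ∀ j, j < k → M ≤ s (4*j+1) + s (4*j+2) + s (4*j+3) + s (4*j+4)) :
    M * k ≤ ∑ j ∈ Finset.Icc 1 (4*k), s j := by
  induction k with
  | zero => simp
  | succ K ih =>
    have h1 := Finset.sum_Icc_succ_top (a := 1) (b := 4*K) (by omega) s
    have h2 := Finset.sum_Icc_succ_top (a := 1) (b := 4*K+1) (by omega) s
    rw [show 4*K+1+1 = 4*K+2 by ring] at h2
    have h3 := Finset.sum_Icc_succ_top (a := 1) (b := 4*K+2) (by omega) s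
    rw [show 4*K+2+1 = 4*K+3 by ring] at h3
    have h4 := Finset.sum_Icc_succ_top (a := 1) (b := 4*K+3) (by omega) s
    rw [show 4*K+3+1 = 4*K+4 by ring] at h4
    rw [show 4*(K+1) = 4*K+4 by ring, h4, h3, h2, h1, Nat.mul_succ]
    have hK := hb K (by omega)
    have hih := ih (fun j hj => hb j (by omega))
    omega

lemma total_count {n m : ℕ} (S : Set (Fin n × Fin m)) :
    ∑ j ∈ Finset.Icc 1 n, copyCount S j ≤ S.ncard := by
  classical
  have hfin := S.toFinite
  rw [Set.ncard_eq_toFinset_card S hfin]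
  set F := hfin.toFinset with hF
  have hcard := Finset.card_eq_sum_card_fiberwise
    (f := fun p : Fin n × Fin m => (p.1 : ℕ) + 1) (s := F) (t := Finset.Icc 1 n)
    (fun p _ => by
      have := p.1.isLt
      simp only [Finset.mem_coe, Finset.mem_Icc]
      omega)
  rw [hcard]
  apply le_of_eq
  apply Finset.sum_congr rfl
  intro j _
  have hset : (S ∩ {p : Fin n × Fin m | (p.1 : ℕ) + 1 = j})
      = ↑(F.filter (fun p => (p.1 : ℕ) + 1 = j)) := by
    ext p
    simp only [hF, Finset.coe_filter, Set.Finite.mem_toFinset, Set.mem_inter_iff,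
      Set.mem_setOf_eq]
  rw [_root_.copyCount, hset, Set.ncard_coe_finset]

theorem stmt_16 (n m : ℕ) (hn4 : 4 ∣ n) (hm : 3 ≤ m)
    (G1 : SimpleGraph (Fin n))
    (hG1 : G1 = SimpleGraph.pathGraph n ∨ G1 = SimpleGraph.cycleGraph n)
    (G2 : SimpleGraph (Fin m))
    (hG2 : G2 = SimpleGraph.pathGraph m ∨ G2 = SimpleGraph.cycleGraph m)
    (S : Set (Fin n × Fin m)) (hS : IsGDA (lexProd G1 G2) S)
    (hpos : ∀ i : ℕ, 2 ≤ i → i ≤ n - 1 → 1 ≤ copyCount S i) :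
    (2 * m - 1) * (n / 4) ≤ S.ncard := by
  obtain ⟨k, rfl⟩ := hn4
  rcases Nat.eq_zero_or_pos k with rfl | hk
  · simp
  have hn : 4 ≤ 4 * k := by omega
  have hDA := hS.1
  have hblock : ∀ j, j < k → 2 * m - 1 ≤ copyCount S (4*j+1) + copyCount S (4*j+2)
      + copyCount S (4*j+3) + copyCount S (4*j+4) := by
    intro j hj
    have hp2 : 1 ≤ copyCount S (4*j+1+1) := by
      rw [show 4*j+1+1 = 4*j+2 by ring]
      exact hpos _ (by omega) (by omega)
    have hp3 : 1 ≤ copyCount S (4*j+2+1) := by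
      rw [show 4*j+2+1 = 4*j+3 by ring]
      exact hpos _ (by omega) (by omega)
    have hw2 := weak_bound hn hm hG1 hG2 hDA (4*j+1) (by omega) (by omega) hp2
    rw [show 4*j+1+2 = 4*j+3 by ring] at hw2
    by_cases hc : copyCount S (4*j+2+1) < m
    · have hs3 := strong_bound hn hm hG1 hG2 hDA (4*j+2) (by omega) (by omega) hp3 hc
      rw [show 4*j+2+2 = 4*j+4 by ring] at hs3
      omega
    · have hw3 := weak_bound hn hm hG1 hG2 hDA (4*j+2) (by omega) (by omega) hp3
      rw [show 4*j+2+2 = 4*j+4 by ring] at hw3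
      rw [show 4*j+2+1 = 4*j+3 by ring] at hc
      omega
  have hsum := sum_blocks_ge (copyCount S) (2 * m - 1) k hblock
  have htot := total_count S
  have hdiv : 4 * k / 4 = k := by omega
  rw [hdiv]
  exact hsum.trans htot
end

section
/- For every m ≥ 3, the set V(G²₃) ∪ (V(G²₂) \ {u}) (all of the third copy of Cₘ together with all but one vertex of the second copy) is a global defensive alliance of P₄ ∘ Cₘ of cardinality 2m − 1. -/
/-! In P₄ ∘ Cₘ the vertex (i, y) is adjacent to every vertex of the fibres over i ± 1 and to its
two cycle neighbours in its own fibre. Path vertices are indexed by Fin 4 = {0, …, 3}, so the set is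
the fibre over 2 together with the fibre over 1 minus (1, u). A vertex (2, x) has outside the set
only the fibre over 3 and (1, u), and inside it the fibre over 1 minus (1, u), itself and (2, x + 1);
a vertex (1, x) ≠ (1, u) has outside the set at most the fibre over 0 and (1, u), and inside it the
fibre over 2 and itself. In both cases each side counts m + 1. -/

open SimpleGraph

lemma mem_closedNbhd {α : Type*} {G : SimpleGraph α} {v w : α} :
    w ∈ closedNbhd G v ↔ w = v ∨ G.Adj v w :=
  Iff.rfl

lemma lexProd_adj {α β : Type*} {G : SimpleGraph α} {H : SimpleGraph β} {x y : α × β} :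
    (lexProd G H).Adj x y ↔ G.Adj x.1 y.1 ∨ (x.1 = y.1 ∧ H.Adj x.2 y.2) :=
  Iff.rfl

lemma cycleGraph_adj_add_one {n : ℕ} (x : Fin (n + 2)) : (cycleGraph (n + 2)).Adj x (x + 1) :=
  cycleGraph_adj.mpr (Or.inr (add_sub_cancel_left x 1))

section FstFiber

variable {α β : Type*}

lemma fst_fiber_eq_prod (a : α) : {p : α × β | p.1 = a} = {a} ×ˢ Set.univ := by
  ext
  simp

lemma ncard_fst_fiber (a : α) : {p : α × β | p.1 = a}.ncard = Nat.card β := by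
  rw [fst_fiber_eq_prod, Set.ncard_prod, Set.ncard_singleton, Set.ncard_univ, one_mul]

lemma ncard_insert_fst_fiber [Finite β] {a : α} {p : α × β} (hp : p.1 ≠ a) :
    (insert p {q : α × β | q.1 = a}).ncard = Nat.card β + 1 := by
  have hfin : {q : α × β | q.1 = a}.Finite := by
    rw [fst_fiber_eq_prod]
    exact (Set.finite_singleton a).prod Set.finite_univ
  rw [Set.ncard_insert_of_notMem (s := {q : α × β | q.1 = a}) hp hfin, ncard_fst_fiber]

end FstFiber

namespace PathLexCycle

variable {n : ℕ} (u : Fin (n + 2))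

local notation "𝒢" => lexProd (pathGraph 4) (cycleGraph (n + 2))

def allianceSet : Set (Fin 4 × Fin (n + 2)) :=
  {p | p.1 = 2} ∪ ({p | p.1 = 1} \ {((1 : Fin 4), u)})

variable {u} in
lemma mem_allianceSet {p : Fin 4 × Fin (n + 2)} :
    p ∈ allianceSet u ↔ p.1 = 2 ∨ (p.1 = 1 ∧ p.2 ≠ u) := by
  obtain ⟨i, y⟩ := p
  simp only [allianceSet, Set.mem_union, Set.mem_sdiff, Set.mem_singleton_iff, Set.mem_ofPred_eq,
    Prod.ext_iff]
  grind

lemma ncard_allianceSet : (allianceSet u).ncard = 2 * (n + 2) - 1 := by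
  have hdisj : Disjoint {p : Fin 4 × Fin (n + 2) | p.1 = 2} ({p | p.1 = 1} \ {((1 : Fin 4), u)}) :=
    Set.disjoint_left.mpr fun p h2 h1 => absurd (h2.symm.trans h1.1) (by decide)
  rw [allianceSet, Set.ncard_union_eq hdisj,
    Set.ncard_sdiff_singleton_of_mem (s := {p : Fin 4 × Fin (n + 2) | p.1 = 1}) rfl,
    ncard_fst_fiber, ncard_fst_fiber, Nat.card_eq_fintype_card, Fintype.card_fin]
  omega

lemma allianceSet_dominating (p : Fin 4 × Fin (n + 2)) :
    p ∈ allianceSet u ∨ ∃ q ∈ allianceSet u, Adj 𝒢 p q := by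
  obtain ⟨i, y⟩ := p
  fin_cases i
  · exact Or.inr ⟨(1, u + 1), mem_allianceSet.mpr (Or.inr ⟨rfl, (cycleGraph_adj_add_one u).ne'⟩),
      Or.inl (show (pathGraph 4).Adj 0 1 from pathGraph_adj.mpr (by decide))⟩
  · by_cases hy : y = u
    · exact Or.inr ⟨(2, y), mem_allianceSet.mpr (Or.inl rfl),
        Or.inl (show (pathGraph 4).Adj 1 2 from pathGraph_adj.mpr (by decide))⟩
    · exact Or.inl (mem_allianceSet.mpr (Or.inr ⟨rfl, hy⟩))
  · exact Or.inl (mem_allianceSet.mpr (Or.inl rfl))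
  · exact Or.inr ⟨(2, y), mem_allianceSet.mpr (Or.inl rfl),
      Or.inl (show (pathGraph 4).Adj 3 2 from pathGraph_adj.mpr (by decide))⟩

lemma allianceSet_defends_of_fst_eq_two (x : Fin (n + 2)) :
    (closedNbhd 𝒢 (2, x) \ allianceSet u).ncard ≤ (closedNbhd 𝒢 (2, x) ∩ allianceSet u).ncard := by
  have hout : closedNbhd 𝒢 (2, x) \ allianceSet u ⊆ insert (1, u) {q | q.1 = 3} := by
    rintro ⟨i, y⟩ ⟨hN, hS⟩
    simp only [mem_closedNbhd, lexProd_adj, pathGraph_adj, mem_allianceSet] at hN hS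
    simp only [Set.mem_insert_iff, Set.mem_ofPred_eq, Prod.ext_iff]
    fin_cases i <;> simp_all
  have hin : insert (2, x) (insert (2, x + 1) ({q | q.1 = 1} \ {(1, u)})) ⊆
      closedNbhd 𝒢 (2, x) ∩ allianceSet u := by
    rintro ⟨i, y⟩ h
    simp only [Set.mem_insert_iff, Set.mem_sdiff, Set.mem_singleton_iff, Set.mem_ofPred_eq,
      Prod.ext_iff] at h
    simp only [Set.mem_inter_iff, mem_closedNbhd, lexProd_adj, pathGraph_adj, mem_allianceSet,
      Prod.ext_iff]
    rcases h with ⟨rfl, rfl⟩ | ⟨rfl, rfl⟩ | ⟨rfl, hy⟩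
    · simp
    · simp [cycleGraph_adj_add_one]
    · simpa using hy
  calc _ ≤ (insert ((1 : Fin 4), u) {q : Fin 4 × Fin (n + 2) | q.1 = 3}).ncard :=
        Set.ncard_le_ncard hout
    _ = n + 3 := by
      rw [ncard_insert_fst_fiber (show (1 : Fin 4) ≠ 3 by decide), Nat.card_eq_fintype_card,
        Fintype.card_fin]
    _ = (insert ((2 : Fin 4), x) (insert ((2 : Fin 4), x + 1)
          ({q : Fin 4 × Fin (n + 2) | q.1 = 1} \ {((1 : Fin 4), u)}))).ncard := by
      rw [Set.ncard_insert_of_notMem (by simp [(cycleGraph_adj_add_one x).ne]),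
        Set.ncard_insert_of_notMem (by simp),
        Set.ncard_sdiff_singleton_of_mem (s := {q : Fin 4 × Fin (n + 2) | q.1 = 1}) rfl,
        ncard_fst_fiber, Nat.card_eq_fintype_card, Fintype.card_fin]
      omega
    _ ≤ _ := Set.ncard_le_ncard hin

lemma allianceSet_defends_of_fst_eq_one {x : Fin (n + 2)} (hx : x ≠ u) :
    (closedNbhd 𝒢 (1, x) \ allianceSet u).ncard ≤ (closedNbhd 𝒢 (1, x) ∩ allianceSet u).ncard := by
  have hout : closedNbhd 𝒢 (1, x) \ allianceSet u ⊆ insert (1, u) {q | q.1 = 0} := by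
    rintro ⟨i, y⟩ ⟨hN, hS⟩
    simp only [mem_closedNbhd, lexProd_adj, pathGraph_adj, mem_allianceSet] at hN hS
    simp only [Set.mem_insert_iff, Set.mem_ofPred_eq, Prod.ext_iff]
    fin_cases i <;> simp_all
  have hin : insert (1, x) {q | q.1 = 2} ⊆ closedNbhd 𝒢 (1, x) ∩ allianceSet u := by
    rintro ⟨i, y⟩ h
    simp only [Set.mem_insert_iff, Set.mem_ofPred_eq, Prod.ext_iff] at h
    simp only [Set.mem_inter_iff, mem_closedNbhd, lexProd_adj, pathGraph_adj, mem_allianceSet,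
      Prod.ext_iff]
    rcases h with ⟨rfl, rfl⟩ | rfl <;> simp [hx]
  calc _ ≤ (insert ((1 : Fin 4), u) {q : Fin 4 × Fin (n + 2) | q.1 = 0}).ncard :=
        Set.ncard_le_ncard hout
    _ = (insert ((1 : Fin 4), x) {q : Fin 4 × Fin (n + 2) | q.1 = 2}).ncard := by
      rw [ncard_insert_fst_fiber (show (1 : Fin 4) ≠ 0 by decide),
        ncard_insert_fst_fiber (show (1 : Fin 4) ≠ 2 by decide)]
    _ ≤ _ := Set.ncard_le_ncard hin

lemma isDefensiveAlliance_allianceSet : IsDefensiveAlliance 𝒢 (allianceSet u) := by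
  rintro ⟨i, x⟩ hv
  rcases mem_allianceSet.mp hv with rfl | ⟨rfl, hx⟩
  · exact allianceSet_defends_of_fst_eq_two u x
  · exact allianceSet_defends_of_fst_eq_one u hx

end PathLexCycle

theorem stmt_19 (m : ℕ) (hm : 3 ≤ m) (u : Fin m) :
    IsGDA (lexProd (SimpleGraph.pathGraph 4) (SimpleGraph.cycleGraph m))
      ({p : Fin 4 × Fin m | p.1 = 2} ∪ ({p : Fin 4 × Fin m | p.1 = 1} \ {((1 : Fin 4), u)})) ∧
    ({p : Fin 4 × Fin m | p.1 = 2} ∪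
        ({p : Fin 4 × Fin m | p.1 = 1} \ {((1 : Fin 4), u)})).ncard = 2 * m - 1 := by
  obtain ⟨n, rfl⟩ : ∃ n, m = n + 2 := ⟨m - 2, by omega⟩
  exact ⟨⟨PathLexCycle.isDefensiveAlliance_allianceSet u, PathLexCycle.allianceSet_dominating u⟩,
    PathLexCycle.ncard_allianceSet u⟩
end
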